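/- arXiv:2104.11205 — 4 statements merged into one kernel-verified Lean document; each statement's English description precedes it below -/
import Mathlib

section
/- Let X be a separable metric space. The set of finitely supported measures in KR(X) is dense in KR(X) with respect to the KR-norm. -/
open MeasureTheory

/-- A real-valued Lipschitz function. -/
def IsLip {X : Type*} [MetricSpace X] (f : X → ℝ) : Prop :=
  ∃ K : NNReal, LipschitzWith K f

/-- Membership in KR(X). -/
def MemKR {X : Type*} [MetricSpace X] [MeasurableSpace X] (μ : SignedMeasure X) : Prop :=
  μ Set.univ = 0 ∧ ∀ f : X → ℝ, IsLip f → Integrable f μ.totalVariation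

/-- The KR norm. -/
noncomputable def KRnorm {X : Type*} [MetricSpace X] [MeasurableSpace X]
    (μ : SignedMeasure X) : ℝ :=
  ⨆ f : {f : X → ℝ // LipschitzWith 1 f},
    |∫ x, f.1 x ∂μ.toJordanDecomposition.posPart -
      ∫ x, f.1 x ∂μ.toJordanDecomposition.negPart|

/-- A finitely supported signed measure: a finite real linear combination of
Dirac measures. -/
def FinSupported {X : Type*} [MeasurableSpace X] (μ : SignedMeasure X) : Prop :=
  ∃ (s : Finset X) (c : X → ℝ),
    μ = ∑ x ∈ s, c x • (Measure.dirac x).toSignedMeasure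


section Helpers

open Measure Set

variable {X : Type*} [MeasurableSpace X]

/-- If a signed measure equals `A - B` for finite measures, then its Jordan parts satisfy
`P + B = Q + A`. -/
lemma jordan_add_eq (A B : Measure X) [IsFiniteMeasure A] [IsFiniteMeasure B]
    (ν : SignedMeasure X) (hν : ν = A.toSignedMeasure - B.toSignedMeasure) :
    ν.toJordanDecomposition.posPart + B = ν.toJordanDecomposition.negPart + A := by
  set P := ν.toJordanDecomposition.posPart
  set Q := ν.toJordanDecomposition.negPart
  ext t ht
  have h1 : ν t = (P t).toReal - (Q t).toReal := by
    conv_lhs => rw [← ν.toSignedMeasure_toJordanDecomposition]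
    exact Measure.toSignedMeasure_sub_apply ht
  have h2 : ν t = (A t).toReal - (B t).toReal := by
    rw [hν]
    rw [VectorMeasure.sub_apply, Measure.toSignedMeasure_apply_measurable ht,
      Measure.toSignedMeasure_apply_measurable ht]
    rfl
  have h3 : (P t).toReal + (B t).toReal = (Q t).toReal + (A t).toReal := by linarith
  have h4 : ((P + B) t).toReal = ((Q + A) t).toReal := by
    rw [Measure.add_apply, Measure.add_apply,
      ENNReal.toReal_add (measure_ne_top _ _) (measure_ne_top _ _),
      ENNReal.toReal_add (measure_ne_top _ _) (measure_ne_top _ _), h3]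
  have := ENNReal.toReal_eq_toReal_iff' (x := (P + B) t) (y := (Q + A) t)
  rw [Measure.add_apply, Measure.add_apply] at *
  exact (this (by finiteness) (by finiteness)).mp h4

lemma jordan_posPart_le (A B : Measure X) [IsFiniteMeasure A] [IsFiniteMeasure B]
    (ν : SignedMeasure X) (hν : ν = A.toSignedMeasure - B.toSignedMeasure) :
    ν.toJordanDecomposition.posPart ≤ A := by
  set P := ν.toJordanDecomposition.posPart
  set Q := ν.toJordanDecomposition.negPart
  obtain ⟨u, hu, hPu, hQu⟩ := ν.toJordanDecomposition.mutuallySingular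
  have hadd := jordan_add_eq A B ν hν
  refine Measure.le_intro fun t ht _ => ?_
  have h1 : P t = P (t ∩ uᶜ) := by
    have h0 : P (t ∩ u) = 0 := measure_mono_null inter_subset_right hPu
    refine le_antisymm ?_ (measure_mono inter_subset_left)
    calc P t = P ((t ∩ u) ∪ (t ∩ uᶜ)) := by rw [Set.inter_union_compl]
    _ ≤ P (t ∩ u) + P (t ∩ uᶜ) := measure_union_le _ _
    _ = P (t ∩ uᶜ) := by rw [h0, zero_add]
  have h2 : Q (t ∩ uᶜ) = 0 := measure_mono_null inter_subset_right hQu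
  have h3 : P (t ∩ uᶜ) + B (t ∩ uᶜ) = Q (t ∩ uᶜ) + A (t ∩ uᶜ) := by
    calc P (t ∩ uᶜ) + B (t ∩ uᶜ) = (P + B) (t ∩ uᶜ) := (Measure.add_apply _ _ _).symm
    _ = (Q + A) (t ∩ uᶜ) := by rw [hadd]
    _ = Q (t ∩ uᶜ) + A (t ∩ uᶜ) := Measure.add_apply _ _ _
  rw [h1]
  calc P (t ∩ uᶜ) ≤ P (t ∩ uᶜ) + B (t ∩ uᶜ) := le_self_add
  _ = Q (t ∩ uᶜ) + A (t ∩ uᶜ) := h3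
  _ = A (t ∩ uᶜ) := by rw [h2, zero_add]
  _ ≤ A t := measure_mono inter_subset_left

lemma jordan_integral_eq (A B : Measure X) [IsFiniteMeasure A] [IsFiniteMeasure B]
    (ν : SignedMeasure X) (hν : ν = A.toSignedMeasure - B.toSignedMeasure)
    {f : X → ℝ} (hfA : Integrable f A) (hfB : Integrable f B) :
    ∫ x, f x ∂ν.toJordanDecomposition.posPart - ∫ x, f x ∂ν.toJordanDecomposition.negPart
      = ∫ x, f x ∂A - ∫ x, f x ∂B := by
  have hν' : ν = B.toSignedMeasure - A.toSignedMeasure → True := fun _ => trivial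
  have hP : ν.toJordanDecomposition.posPart ≤ A := jordan_posPart_le A B ν hν
  have hQ : ν.toJordanDecomposition.negPart ≤ B := by
    have : (-ν) = B.toSignedMeasure - A.toSignedMeasure := by rw [hν]; abel
    have h := jordan_posPart_le B A (-ν) this
    rwa [ν.toJordanDecomposition_neg, JordanDecomposition.neg_posPart] at h
  have hfP : Integrable f ν.toJordanDecomposition.posPart := hfA.mono_measure hP
  have hfQ : Integrable f ν.toJordanDecomposition.negPart := hfB.mono_measure hQ
  have hadd := jordan_add_eq A B ν hν
  have h1 : ∫ x, f x ∂(ν.toJordanDecomposition.posPart + B)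
      = ∫ x, f x ∂(ν.toJordanDecomposition.negPart + A) := by rw [hadd]
  rw [integral_add_measure hfP hfB, integral_add_measure hfQ hfA] at h1
  linarith

lemma integrable_of_null_compl (m : Measure X) [IsFiniteMeasure m] (s : Finset X)
    (hs : m ((↑s : Set X)ᶜ) = 0) (f : X → ℝ) (hf : AEStronglyMeasurable f m) :
    Integrable f m := by
  refine ⟨hf, HasFiniteIntegral.of_bounded (C := ∑ x ∈ s, |f x|) ?_⟩
  have hae : ∀ᵐ x ∂m, x ∈ (↑s : Set X) := by
    rw [ae_iff]
    exact hs
  filter_upwards [hae] with x hx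
  rw [Real.norm_eq_abs]
  exact Finset.single_le_sum (fun y _ => abs_nonneg (f y)) hx

lemma toSM_eq_sum_dirac [MeasurableSingletonClass X] (m : Measure X) [IsFiniteMeasure m]
    (s : Finset X) (hs : m ((↑s : Set X)ᶜ) = 0) :
    m.toSignedMeasure = ∑ x ∈ s, (m {x}).toReal • (Measure.dirac x).toSignedMeasure := by
  ext t ht
  have hsum : (⇑(∑ x ∈ s, (m {x}).toReal • (Measure.dirac x).toSignedMeasure) : Set X → ℝ)
      = ∑ x ∈ s, ⇑((m {x}).toReal • (Measure.dirac x).toSignedMeasure) :=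
    _root_.map_sum (FunLike.coeAddMonoidHom (SignedMeasure X) (Set X) ℝ) _ s
  rw [Measure.toSignedMeasure_apply_measurable ht, hsum]
  rw [Finset.sum_apply]
  have hmt : m t = ∑ x ∈ s, m ({x} ∩ t) := by
    have h1 : m t = m (t ∩ ↑s) := by
      refine le_antisymm ?_ (measure_mono inter_subset_left)
      calc m t = m ((t ∩ ↑s) ∪ (t ∩ (↑s)ᶜ)) := by rw [Set.inter_union_compl]
      _ ≤ m (t ∩ ↑s) + m (t ∩ (↑s)ᶜ) := measure_union_le _ _
      _ = m (t ∩ ↑s) := by rw [measure_mono_null inter_subset_right hs, add_zero]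
    have h2 : t ∩ ↑s = ⋃ x ∈ s, {x} ∩ t := by
      ext y; simp [Set.mem_iUnion, and_comm]
    rw [h1, h2]
    rw [measure_biUnion_finset ?_ (fun x _ => (measurableSet_singleton x).inter ht)]
    intro x hx y hy hxy
    simp only [Function.onFun]
    exact (Set.disjoint_singleton.mpr hxy).mono inter_subset_left inter_subset_left
  rw [measureReal_def, hmt, ENNReal.toReal_sum (fun x _ => measure_ne_top _ _)]
  refine Finset.sum_congr rfl fun x hx => ?_
  rw [VectorMeasure.smul_apply, Measure.toSignedMeasure_apply_measurable ht,
    measureReal_def, Measure.dirac_apply' _ ht]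
  by_cases hxt : x ∈ t
  · rw [Set.indicator_of_mem hxt, Set.inter_eq_self_of_subset_left (by simpa using hxt)]
    simp
  · rw [Set.indicator_of_notMem hxt]
    simp [Set.singleton_inter_eq_empty.mpr hxt]

lemma approx_bound {Y : Type*} [MetricSpace Y] [MeasurableSpace Y] [BorelSpace Y]
    (r : Measure Y) [IsFiniteMeasure r] (T : Y → Y) (hT : Measurable T)
    (f : Y → ℝ) (hf : LipschitzWith 1 f) (hfr : Integrable f r)
    (hfT : Integrable (fun x => f (T x)) r)
    (b : Y → ℝ) (hb : Integrable b r) (hbd : ∀ x, dist x (T x) ≤ b x) :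
    |∫ x, f x ∂r - ∫ x, f x ∂(r.map T)| ≤ ∫ x, b x ∂r := by
  rw [integral_map hT.aemeasurable hf.continuous.aestronglyMeasurable]
  rw [← integral_sub hfr hfT]
  calc |∫ x, (f x - f (T x)) ∂r| ≤ ∫ x, |f x - f (T x)| ∂r := by
        simpa [Real.norm_eq_abs] using
          norm_integral_le_integral_norm (μ := r) (f := fun x => f x - f (T x))
  _ ≤ ∫ x, b x ∂r := by
      refine integral_mono (hfr.sub hfT).abs hb fun x => ?_
      calc |f x - f (T x)| = dist (f x) (f (T x)) := (Real.dist_eq _ _).symm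
      _ ≤ 1 * dist x (T x) := hf.dist_le_mul x (T x)
      _ ≤ b x := by rw [one_mul]; exact hbd x

lemma jordan_negPart_le (A B : Measure X) [IsFiniteMeasure A] [IsFiniteMeasure B]
    (ν : SignedMeasure X) (hν : ν = A.toSignedMeasure - B.toSignedMeasure) :
    ν.toJordanDecomposition.negPart ≤ B := by
  have h' : (-ν) = B.toSignedMeasure - A.toSignedMeasure := by rw [hν]; abel
  have h := jordan_posPart_le B A (-ν) h'
  rwa [ν.toJordanDecomposition_neg, JordanDecomposition.neg_posPart] at h

end Helpers

open Measure Set in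
theorem stmt5 {X : Type*} [MetricSpace X] [TopologicalSpace.SeparableSpace X]
    [MeasurableSpace X] [BorelSpace X]
    (μ : SignedMeasure X) (hμ : MemKR μ) (ε : ℝ) (hε : 0 < ε) :
    ∃ μ₀ : SignedMeasure X, FinSupported μ₀ ∧ MemKR μ₀ ∧ KRnorm (μ - μ₀) ≤ ε := by
  classical
  obtain ⟨hμ0, hμint⟩ := hμ
  haveI hne : Nonempty {f : X → ℝ // LipschitzWith 1 f} :=
    ⟨⟨fun _ => 0, (LipschitzWith.const 0).weaken zero_le_one⟩⟩
  by_cases hXe : Nonempty X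
  swap
  · haveI : IsEmpty X := not_nonempty_iff.mp hXe
    refine ⟨0, ⟨∅, fun _ => 0, by simp⟩, ⟨by simp, ?_⟩, ?_⟩
    · intro f _
      rw [SignedMeasure.totalVariation_zero]
      exact integrable_zero_measure
    · unfold KRnorm
      refine ciSup_le fun f => ?_
      have h1 : ∀ (m : Measure X), ∫ x, f.1 x ∂m = 0 := fun m => integral_of_isEmpty
      simp only [h1, sub_zero, abs_zero]
      all_goals exact hε.le
  haveI := hXe
  set p := μ.toJordanDecomposition.posPart with hp
  set q := μ.toJordanDecomposition.negPart with hq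
  have htv : μ.totalVariation = p + q := rfl
  haveI : IsFiniteMeasure p := hp ▸ inferInstance
  haveI : IsFiniteMeasure q := hq ▸ inferInstance
  have hμdecomp : μ = p.toSignedMeasure - q.toSignedMeasure := by
    conv_lhs => rw [← μ.toSignedMeasure_toJordanDecomposition]
    rfl
  clear_value p q
  set u : ℕ → X := TopologicalSpace.denseSeq X with hu_def
  have hu : DenseRange u := TopologicalSpace.denseRange_denseSeq X
  set x₀ : X := u 0 with hx₀
  set g : X → ℝ := fun x => dist x x₀ with hg_def
  have hglip : LipschitzWith 1 g := LipschitzWith.dist_left x₀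
  have hgint : Integrable g (p + q) := by
    have := hμint g ⟨1, hglip⟩; rwa [htv] at this
  have hgp : Integrable g p := (integrable_add_measure.mp hgint).1
  have hgq : Integrable g q := (integrable_add_measure.mp hgint).2
  set M : ℝ := (p Set.univ).toReal + (q Set.univ).toReal with hM_def
  have hM : 0 ≤ M := add_nonneg ENNReal.toReal_nonneg ENNReal.toReal_nonneg
  set δ : ℝ := ε / (2 * (M + 1)) with hδ_def
  have hδ : 0 < δ := by positivity
  have hex : ∀ x : X, ∃ n, dist x (u n) < δ := fun x => hu.exists_dist_lt x hδ
  set idx : X → ℕ := fun x => Nat.find (hex x) with hidx_def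
  have hidx : Measurable idx := by
    apply measurable_to_countable'
    intro n
    have hpre : idx ⁻¹' {n} =
        Metric.ball (u n) δ ∩ ⋂ m, ⋂ _ : m < n, (Metric.ball (u m) δ)ᶜ := by
      ext x
      simp only [Set.mem_preimage, Set.mem_singleton_iff, hidx_def, Nat.find_eq_iff,
        Set.mem_inter_iff, Metric.mem_ball, Set.mem_iInter, Set.mem_compl_iff, not_lt]
    rw [hpre]
    exact measurableSet_ball.inter
      (MeasurableSet.iInter fun m => MeasurableSet.iInter fun _ => measurableSet_ball.compl)
  set S : ℕ → Set X := fun N => idx ⁻¹' Set.Ici N with hS_def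
  have hSmeas : ∀ N, MeasurableSet (S N) := fun N => hidx measurableSet_Ici
  set F : ℕ → X → ℝ := fun N => (S N).indicator g with hF_def
  have hFint : ∀ N, Integrable (F N) (p + q) := fun N => hgint.indicator (hSmeas N)
  have htail : Filter.Tendsto (fun N => ∫ x, F N x ∂(p + q)) Filter.atTop (nhds 0) := by
    have h0 : (0 : ℝ) = ∫ x, (0 : ℝ) ∂(p + q) := by rw [integral_zero]
    rw [h0]
    refine tendsto_integral_of_dominated_convergence g
      (fun N => (hFint N).aestronglyMeasurable) hgint (fun N => ae_of_all _ fun x => ?_)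
      (ae_of_all _ fun x => ?_)
    · simp only [Real.norm_eq_abs, hF_def]
      by_cases hx : x ∈ S N
      · rw [Set.indicator_of_mem hx]
        exact le_of_eq (abs_of_nonneg dist_nonneg)
      · rw [Set.indicator_of_notMem hx, abs_zero]
        exact dist_nonneg
    · have hev : ∀ᶠ N in Filter.atTop, F N x = 0 := by
        refine Filter.eventually_atTop.mpr ⟨idx x + 1, fun N hN => ?_⟩
        simp only [hF_def]
        apply Set.indicator_of_notMem
        simp only [hS_def, Set.mem_preimage, Set.mem_Ici, not_le]
        omega
      exact Filter.Tendsto.congr' (hev.mono fun N h => h.symm) tendsto_const_nhds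
  obtain ⟨N, hN⟩ := (htail.eventually_lt_const (half_pos hε)).exists
  set TN : X → X := fun x => if idx x < N then u (idx x) else x₀ with hTN_def
  have hTN : Measurable TN := by
    refine Measurable.ite (hidx measurableSet_Iio) (measurable_from_top.comp hidx)
      measurable_const
  set A₀ : Measure X := p.map TN with hA₀_def
  set B₀ : Measure X := q.map TN with hB₀_def
  set s : Finset X := insert x₀ (Finset.image u (Finset.range N)) with hs_def
  have hrange : ∀ x, TN x ∈ (↑s : Set X) := by
    intro x
    simp only [hTN_def]
    by_cases h : idx x < N
    · rw [if_pos h]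
      simp only [hs_def, Finset.coe_insert, Set.mem_insert_iff, Finset.coe_image,
        Finset.coe_range, Set.mem_image]
      exact Or.inr ⟨idx x, by simpa using h, rfl⟩
    · rw [if_neg h]
      simp [hs_def]
  have hsc : MeasurableSet ((↑s : Set X)ᶜ) := s.finite_toSet.measurableSet.compl
  have hA₀c : A₀ ((↑s : Set X)ᶜ) = 0 := by
    rw [hA₀_def, Measure.map_apply hTN hsc]
    have : TN ⁻¹' ((↑s : Set X)ᶜ) = ∅ := by
      ext x; simp only [Set.mem_preimage, Set.mem_compl_iff, Set.mem_empty_iff_false,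
        iff_false, not_not]
      exact hrange x
    rw [this, measure_empty]
  have hB₀c : B₀ ((↑s : Set X)ᶜ) = 0 := by
    rw [hB₀_def, Measure.map_apply hTN hsc]
    have : TN ⁻¹' ((↑s : Set X)ᶜ) = ∅ := by
      ext x; simp only [Set.mem_preimage, Set.mem_compl_iff, Set.mem_empty_iff_false,
        iff_false, not_not]
      exact hrange x
    rw [this, measure_empty]
  refine ⟨A₀.toSignedMeasure - B₀.toSignedMeasure, ?_, ⟨?_, ?_⟩, ?_⟩
  · refine ⟨s, fun x => (A₀ {x}).toReal - (B₀ {x}).toReal, ?_⟩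
    rw [toSM_eq_sum_dirac A₀ s hA₀c, toSM_eq_sum_dirac B₀ s hB₀c, ← Finset.sum_sub_distrib]
    exact Finset.sum_congr rfl fun x _ => (sub_smul _ _ _).symm
  · -- total mass zero
    have hμuniv : (p Set.univ).toReal - (q Set.univ).toReal = 0 := by
      have := hμ0
      rw [hμdecomp] at this
      rwa [VectorMeasure.sub_apply, Measure.toSignedMeasure_apply_measurable MeasurableSet.univ,
        Measure.toSignedMeasure_apply_measurable MeasurableSet.univ] at this
    rw [VectorMeasure.sub_apply,
      Measure.toSignedMeasure_apply_measurable MeasurableSet.univ,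
      Measure.toSignedMeasure_apply_measurable MeasurableSet.univ,
      measureReal_def, measureReal_def,
      hA₀_def, hB₀_def, Measure.map_apply hTN MeasurableSet.univ,
      Measure.map_apply hTN MeasurableSet.univ, Set.preimage_univ]
    exact hμuniv
  · -- integrability for μ₀
    rintro f ⟨K, hK⟩
    have hfA₀ : Integrable f A₀ :=
      integrable_of_null_compl A₀ s hA₀c f hK.continuous.aestronglyMeasurable
    have hfB₀ : Integrable f B₀ :=
      integrable_of_null_compl B₀ s hB₀c f hK.continuous.aestronglyMeasurable
    have hPle := jordan_posPart_le A₀ B₀ _ rfl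
    have hQle := jordan_negPart_le A₀ B₀ _ rfl
    rw [SignedMeasure.totalVariation]
    exact integrable_add_measure.mpr ⟨hfA₀.mono_measure hPle, hfB₀.mono_measure hQle⟩
  · -- the KR norm bound
    set μ₀ : SignedMeasure X := A₀.toSignedMeasure - B₀.toSignedMeasure with hμ₀_def
    have hdiff : μ - μ₀ = (p + B₀).toSignedMeasure - (q + A₀).toSignedMeasure := by
      rw [Measure.toSignedMeasure_add, Measure.toSignedMeasure_add, hμdecomp, hμ₀_def]
      abel
    -- distance bound function
    set b : X → ℝ := fun x => δ + (S N).indicator g x with hb_def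
    have hbd : ∀ x, dist x (TN x) ≤ b x := by
      intro x
      simp only [hb_def, hTN_def]
      by_cases h : idx x < N
      · rw [if_pos h, Set.indicator_of_notMem (by
          simp only [hS_def, Set.mem_preimage, Set.mem_Ici, not_le]; exact h)]
        have := Nat.find_spec (hex x)
        simpa using this.le
      · rw [if_neg h, Set.indicator_of_mem (by
          simp only [hS_def, Set.mem_preimage, Set.mem_Ici]; omega)]
        rw [hg_def]
        simp [hδ.le]
    have hbint : Integrable b (p + q) := (integrable_const δ).add (hFint N)
    have hbp : Integrable b p := (integrable_add_measure.mp hbint).1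
    have hbq : Integrable b q := (integrable_add_measure.mp hbint).2
    have hbp_val : ∫ x, b x ∂p = (p Set.univ).toReal * δ + ∫ x, F N x ∂p := by
      rw [hb_def, integral_add (integrable_const δ) ((integrable_add_measure.mp (hFint N)).1),
        integral_const, smul_eq_mul, measureReal_def]
    have hbq_val : ∫ x, b x ∂q = (q Set.univ).toReal * δ + ∫ x, F N x ∂q := by
      rw [hb_def, integral_add (integrable_const δ) ((integrable_add_measure.mp (hFint N)).2),
        integral_const, smul_eq_mul, measureReal_def]
    unfold KRnorm
    refine ciSup_le ?_
    rintro ⟨f, hf⟩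
    simp only
    have hftv : Integrable f (p + q) := by
      have := hμint f ⟨1, hf⟩; rwa [htv] at this
    have hfp : Integrable f p := (integrable_add_measure.mp hftv).1
    have hfq : Integrable f q := (integrable_add_measure.mp hftv).2
    have hfA₀ : Integrable f A₀ :=
      integrable_of_null_compl A₀ s hA₀c f hf.continuous.aestronglyMeasurable
    have hfB₀ : Integrable f B₀ :=
      integrable_of_null_compl B₀ s hB₀c f hf.continuous.aestronglyMeasurable
    have hfTNp : Integrable (fun x => f (TN x)) p := by
      have h := (integrable_map_measure (μ := p) (f := TN)
        hf.continuous.aestronglyMeasurable hTN.aemeasurable).mp hfA₀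
      exact h
    have hfTNq : Integrable (fun x => f (TN x)) q := by
      have h := (integrable_map_measure (μ := q) (f := TN)
        hf.continuous.aestronglyMeasurable hTN.aemeasurable).mp hfB₀
      exact h
    rw [jordan_integral_eq (p + B₀) (q + A₀) (μ - μ₀) hdiff
      (integrable_add_measure.mpr ⟨hfp, hfB₀⟩) (integrable_add_measure.mpr ⟨hfq, hfA₀⟩)]
    rw [integral_add_measure hfp hfB₀, integral_add_measure hfq hfA₀]
    have keyp : |∫ x, f x ∂p - ∫ x, f x ∂A₀| ≤ ∫ x, b x ∂p :=
      approx_bound p TN hTN f hf hfp hfTNp b hbp hbd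
    have keyq : |∫ x, f x ∂q - ∫ x, f x ∂B₀| ≤ ∫ x, b x ∂q :=
      approx_bound q TN hTN f hf hfq hfTNq b hbq hbd
    have habs : |(∫ x, f x ∂p + ∫ x, f x ∂B₀) - (∫ x, f x ∂q + ∫ x, f x ∂A₀)|
        ≤ |∫ x, f x ∂p - ∫ x, f x ∂A₀| + |∫ x, f x ∂q - ∫ x, f x ∂B₀| := by
      have h1 : (∫ x, f x ∂p + ∫ x, f x ∂B₀) - (∫ x, f x ∂q + ∫ x, f x ∂A₀)
          = (∫ x, f x ∂p - ∫ x, f x ∂A₀) - (∫ x, f x ∂q - ∫ x, f x ∂B₀) := by ring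
      rw [h1]
      exact abs_sub _ _
    have htail_sum : ∫ x, F N x ∂p + ∫ x, F N x ∂q = ∫ x, F N x ∂(p + q) :=
      (integral_add_measure (integrable_add_measure.mp (hFint N)).1
        (integrable_add_measure.mp (hFint N)).2).symm
    have hδM : M * δ ≤ ε / 2 := by
      have h1 : (M + 1) * δ = ε / 2 := by
        rw [hδ_def]; field_simp
      nlinarith [hδ.le]
    calc |(∫ x, f x ∂p + ∫ x, f x ∂B₀) - (∫ x, f x ∂q + ∫ x, f x ∂A₀)|
        ≤ |∫ x, f x ∂p - ∫ x, f x ∂A₀| + |∫ x, f x ∂q - ∫ x, f x ∂B₀| := habs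
    _ ≤ ∫ x, b x ∂p + ∫ x, b x ∂q := add_le_add keyp keyq
    _ = M * δ + ∫ x, F N x ∂(p + q) := by
        rw [hbp_val, hbq_val, ← htail_sum, hM_def]; ring
    _ ≤ ε / 2 + ε / 2 := add_le_add hδM hN.le
    _ = ε := by ring
end

section
/- Let X be a separable metric space and 𝒰 a family of Lipschitz functions on X. Define the preorder ≿ on Δ₁(X) by p ≿ q iff ∫ u dp ≥ ∫ u dq for every u ∈ 𝒰. Then ≿ is Lipschitz: whenever q ≿ p fails, there is K > 0 such that for all p', q' ∈ Δ₁(X) and all λ with 0 ≤ λ < K/(K + W₁(p',q')), the relation (1−λ)q + λq' ≿ (1−λ)p + λp' fails. -/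
open MeasureTheory

/-- Membership in Δ₁(X). -/
def MemDelta1 {X : Type*} [MetricSpace X] [MeasurableSpace X] (p : Measure X) : Prop :=
  IsProbabilityMeasure p ∧ ∀ f : X → ℝ, IsLip f → Integrable f p

/-- The Wasserstein 1-metric, via Kantorovich–Rubinstein duality. -/
noncomputable def W1 {X : Type*} [MetricSpace X] [MeasurableSpace X]
    (p q : Measure X) : ℝ :=
  ⨆ f : {f : X → ℝ // LipschitzWith 1 f}, |∫ x, f.1 x ∂p - ∫ x, f.1 x ∂q|

/-- The mixture (1 − λ)p + λq of two measures. -/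
noncomputable def mix {X : Type*} [MeasurableSpace X] (p q : Measure X) (lam : ℝ) :
    Measure X :=
  ENNReal.ofReal (1 - lam) • p + ENNReal.ofReal lam • q

lemma W1_nonneg {X : Type*} [MetricSpace X] [MeasurableSpace X]
    (p q : Measure X) : 0 ≤ W1 p q :=
  Real.iSup_nonneg fun _ => abs_nonneg _

lemma integral_mix {X : Type*} [MetricSpace X] [MeasurableSpace X]
    (p p' : Measure X) (u : X → ℝ) (lam : ℝ) (h0 : 0 ≤ lam) (h1 : lam ≤ 1)
    (hu : Integrable u p) (hu' : Integrable u p') :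
    ∫ x, u x ∂(mix p p' lam) = (1 - lam) * ∫ x, u x ∂p + lam * ∫ x, u x ∂p' := by
  rw [mix, integral_add_measure (hu.smul_measure ENNReal.ofReal_ne_top)
    (hu'.smul_measure ENNReal.ofReal_ne_top), integral_smul_measure, integral_smul_measure,
    ENNReal.toReal_ofReal (by linarith), ENNReal.toReal_ofReal h0, smul_eq_mul, smul_eq_mul]

lemma bddAbove_W1 {X : Type*} [MetricSpace X] [MeasurableSpace X] [BorelSpace X]
    [Nonempty X] (p' q' : Measure X) (hp' : MemDelta1 p') (hq' : MemDelta1 q') :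
    BddAbove (Set.range fun f : {f : X → ℝ // LipschitzWith 1 f} =>
      |∫ x, f.1 x ∂p' - ∫ x, f.1 x ∂q'|) := by
  obtain ⟨x0⟩ := ‹Nonempty X›
  have hd : IsLip (fun x : X => dist x x0) := ⟨1, LipschitzWith.dist_left x0⟩
  have hdp' := hp'.2 _ hd
  have hdq' := hq'.2 _ hd
  refine ⟨∫ x, dist x x0 ∂p' + ∫ x, dist x x0 ∂q', ?_⟩
  rintro x ⟨f, rfl⟩
  have hfl : IsLip f.1 := ⟨1, f.2⟩
  have hfp' := hp'.2 _ hfl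
  have hfq' := hq'.2 _ hfl
  have hP : IsProbabilityMeasure p' := hp'.1
  have hQ : IsProbabilityMeasure q' := hq'.1
  have key : ∀ (μ : Measure X), IsProbabilityMeasure μ → Integrable f.1 μ →
      Integrable (fun x => dist x x0) μ → |∫ x, f.1 x ∂μ - f.1 x0| ≤ ∫ x, dist x x0 ∂μ := by
    intro μ hμ hfμ hdμ
    have h1 : ∫ x, f.1 x ∂μ - f.1 x0 = ∫ x, (f.1 x - f.1 x0) ∂μ := by
      rw [integral_sub hfμ (integrable_const _), integral_const, probReal_univ,
        one_smul]
    rw [h1]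
    calc |∫ x, (f.1 x - f.1 x0) ∂μ| ≤ ∫ x, |f.1 x - f.1 x0| ∂μ := by
          simpa using norm_integral_le_integral_norm (μ := μ) (f := fun x => f.1 x - f.1 x0)
      _ ≤ ∫ x, dist x x0 ∂μ := by
          refine integral_mono (hfμ.sub (integrable_const _)).abs hdμ fun x => ?_
          have := f.2.dist_le_mul x x0
          simpa [Real.dist_eq, NNReal.coe_one, one_mul] using this
  have kp := key p' hP hfp' hdp'
  have kq := key q' hQ hfq' hdq'
  have heq : ∫ x, f.1 x ∂p' - ∫ x, f.1 x ∂q' =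
      (∫ x, f.1 x ∂p' - f.1 x0) - (∫ x, f.1 x ∂q' - f.1 x0) := by ring
  have : |∫ x, f.1 x ∂p' - ∫ x, f.1 x ∂q'| ≤
      |∫ x, f.1 x ∂p' - f.1 x0| + |∫ x, f.1 x ∂q' - f.1 x0| := by
    rw [heq]; exact abs_sub _ _
  linarith

lemma diff_le_W1 {X : Type*} [MetricSpace X] [MeasurableSpace X] [BorelSpace X]
    [Nonempty X] (p' q' : Measure X) (hp' : MemDelta1 p') (hq' : MemDelta1 q')
    (u : X → ℝ) (L : ℝ) (hL : 0 < L) (hu : LipschitzWith (Real.toNNReal L) u) :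
    ∫ x, u x ∂q' - ∫ x, u x ∂p' ≤ L * W1 p' q' := by
  have hg : LipschitzWith 1 (fun x => L⁻¹ * u x) := by
    intro x y
    have h1 := hu x y
    calc edist (L⁻¹ * u x) (L⁻¹ * u y) = ENNReal.ofReal L⁻¹ * edist (u x) (u y) := by
          rw [edist_dist, edist_dist, Real.dist_eq, Real.dist_eq, ← mul_sub,
            abs_mul, abs_of_pos (inv_pos.2 hL), ENNReal.ofReal_mul (le_of_lt (inv_pos.2 hL))]
      _ ≤ ENNReal.ofReal L⁻¹ * (((Real.toNNReal L : NNReal) : ENNReal) * edist x y) := by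
          exact mul_le_mul_right h1 _
      _ = 1 * edist x y := by
          rw [← mul_assoc]
          congr 1
          rw [← ENNReal.ofReal_coe_nnreal, Real.coe_toNNReal _ hL.le,
            ← ENNReal.ofReal_mul (inv_nonneg.2 hL.le), inv_mul_cancel₀ hL.ne',
            ENNReal.ofReal_one]
  have hle : |∫ x, (fun x => L⁻¹ * u x) x ∂p' - ∫ x, (fun x => L⁻¹ * u x) x ∂q'| ≤ W1 p' q' :=
    le_ciSup (bddAbove_W1 p' q' hp' hq') (⟨fun x => L⁻¹ * u x, hg⟩ : {f : X → ℝ // LipschitzWith 1 f})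
  rw [integral_const_mul, integral_const_mul] at hle
  have h2 : L⁻¹ * ∫ x, u x ∂q' - L⁻¹ * ∫ x, u x ∂p' ≤ W1 p' q' := by
    have := neg_abs_le (L⁻¹ * ∫ x, u x ∂p' - L⁻¹ * ∫ x, u x ∂q')
    linarith
  have h3 := mul_le_mul_of_nonneg_left h2 hL.le
  rw [mul_sub, ← mul_assoc, ← mul_assoc, mul_inv_cancel₀ hL.ne', one_mul, one_mul] at h3
  linarith

theorem stmt7 {X : Type*} [MetricSpace X] [TopologicalSpace.SeparableSpace X]
    [MeasurableSpace X] [BorelSpace X]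
    (𝒰 : Set (X → ℝ)) (h𝒰 : ∀ u ∈ 𝒰, IsLip u)
    (R : Measure X → Measure X → Prop)
    (hR : ∀ p q : Measure X,
      (R p q ↔ ∀ u ∈ 𝒰, ∫ x, u x ∂q ≤ ∫ x, u x ∂p))
    (p q : Measure X) (hp : MemDelta1 p) (hq : MemDelta1 q) (h : ¬ R q p) :
    ∃ K : ℝ, 0 < K ∧ ∀ p' q' : Measure X, MemDelta1 p' → MemDelta1 q' →
      ∀ lam : ℝ, 0 ≤ lam → lam < K / (K + W1 p' q') →
        ¬ R (mix q q' lam) (mix p p' lam) := by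
  -- X is nonempty since it carries a probability measure
  have hX : Nonempty X := by
    by_contra hne
    have : p Set.univ = 0 := by
      rw [Set.univ_eq_empty_iff.2 (not_nonempty_iff.1 hne)]
      exact measure_empty
    have h1 : p Set.univ = 1 := hp.1.measure_univ
    simp [h1] at this
  -- get a witness u with ∫ u dq < ∫ u dp
  rw [hR] at h
  push_neg at h
  obtain ⟨u, hu𝒰, hlt⟩ := h
  obtain ⟨K₀, hK₀⟩ := h𝒰 u hu𝒰
  set L : ℝ := max (K₀ : ℝ) 1 with hLdef
  have hLpos : 0 < L := lt_of_lt_of_le one_pos (le_max_right _ _)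
  have huL : LipschitzWith (Real.toNNReal L) u := by
    refine hK₀.weaken ?_
    rw [← NNReal.coe_le_coe, Real.coe_toNNReal _ hLpos.le]
    exact le_max_left _ _
  set ε : ℝ := ∫ x, u x ∂p - ∫ x, u x ∂q with hεdef
  have hε : 0 < ε := sub_pos.2 hlt
  refine ⟨ε / L, div_pos hε hLpos, ?_⟩
  intro p' q' hp' hq' lam hlam0 hlam1
  set W := W1 p' q' with hWdef
  have hW : 0 ≤ W := W1_nonneg p' q'
  set K := ε / L with hKdef
  have hKpos : 0 < K := div_pos hε hLpos
  have hlam_lt1 : lam < 1 :=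
    hlam1.trans_le ((div_le_one (by linarith)).2 (by linarith))
  -- key quantitative bound: lam * (K + W) < K
  have hmul : lam * (K + W) < K := by
    calc lam * (K + W) < (K / (K + W)) * (K + W) := by
          exact mul_lt_mul_of_pos_right hlam1 (by linarith)
      _ = K := div_mul_cancel₀ _ (by positivity)
  -- hence lam * L * W < (1 - lam) * ε
  have hquant : lam * (L * W) < (1 - lam) * ε := by
    have h1 : lam * K + lam * W < K := by linarith [hmul, mul_add lam K W]
    have h2 : L * (lam * K + lam * W) < L * K := mul_lt_mul_of_pos_left h1 hLpos
    have h3 : L * K = ε := by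
      rw [hKdef, mul_div_cancel₀ _ hLpos.ne']
    nlinarith
  rw [hR]
  push_neg
  refine ⟨u, hu𝒰, ?_⟩
  have hup := hp.2 u ⟨K₀, hK₀⟩
  have huq := hq.2 u ⟨K₀, hK₀⟩
  have hup' := hp'.2 u ⟨K₀, hK₀⟩
  have huq' := hq'.2 u ⟨K₀, hK₀⟩
  rw [integral_mix p p' u lam hlam0 hlam_lt1.le hup hup',
    integral_mix q q' u lam hlam0 hlam_lt1.le huq huq']
  have hdiff : ∫ x, u x ∂q' - ∫ x, u x ∂p' ≤ L * W :=
    diff_le_W1 p' q' hp' hq' u L hLpos huL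
  nlinarith [hε, hquant, hdiff, hlam0]
end

section
/- Let X be a separable metric space and ≿ a total Lipschitz affine preorder on Δ₁(X). Then there exists a single Lipschitz function u : X → ℝ such that for all p,q ∈ Δ₁(X): p ≿ q iff ∫ u dp ≥ ∫ u dq. -/
open MeasureTheory

/-- The preorder ≿ is affine on Δ₁(X). -/
def AffinePre {X : Type*} [MetricSpace X] [MeasurableSpace X]
    (R : Measure X → Measure X → Prop) : Prop :=
  ∀ p q r : Measure X, MemDelta1 p → MemDelta1 q → MemDelta1 r →
    ∀ lam : ℝ, 0 ≤ lam → lam < 1 →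
      (R p q ↔ R (mix p r lam) (mix q r lam))

/-- The preorder ≿ is Lipschitz on Δ₁(X). -/
def LipschitzPre {X : Type*} [MetricSpace X] [MeasurableSpace X]
    (R : Measure X → Measure X → Prop) : Prop :=
  ∀ p q : Measure X, MemDelta1 p → MemDelta1 q → ¬ R q p →
    ∃ K : ℝ, 0 < K ∧ ∀ p' q' : Measure X, MemDelta1 p' → MemDelta1 q' →
      ∀ lam : ℝ, 0 ≤ lam → lam < K / (K + W1 p' q') →
        ¬ R (mix q q' lam) (mix p p' lam)



open MeasureTheory Filter

set_option linter.unusedSectionVars false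
set_option linter.unnecessarySeqFocus false
namespace Stmt13

variable {X : Type*} [MetricSpace X] [MeasurableSpace X]

lemma lip_integrable {p : Measure X} (hp : MemDelta1 p) {K : NNReal} {f : X → ℝ}
    (hf : LipschitzWith K f) : Integrable f p := hp.2 f ⟨K, hf⟩

lemma lip_dist (x₀ : X) : LipschitzWith 1 (fun x : X => dist x x₀) :=
  LipschitzWith.of_dist_le_mul fun x y => by
    rw [NNReal.coe_one, one_mul, Real.dist_eq]; exact abs_dist_sub_le x y x₀

lemma dist_integrable {p : Measure X} (hp : MemDelta1 p) (x₀ : X) :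
    Integrable (fun x => dist x x₀) p :=
  lip_integrable hp (lip_dist x₀)

lemma memDelta1_nonempty {p : Measure X} (hp : MemDelta1 p) : Nonempty X := by
  by_contra h
  have h1 : p Set.univ = 1 := hp.1.measure_univ
  rw [Set.univ_eq_empty_iff.2 (not_nonempty_iff.1 h), measure_empty] at h1
  exact zero_ne_one h1

lemma mix_memDelta1 {p q : Measure X} (hp : MemDelta1 p) (hq : MemDelta1 q) {l : ℝ}
    (h0 : 0 ≤ l) (h1 : l ≤ 1) : MemDelta1 (mix p q l) := by
  constructor
  · constructor
    simp only [mix, Measure.add_apply, Measure.smul_apply, smul_eq_mul,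
      hp.1.measure_univ, hq.1.measure_univ, mul_one]
    rw [← ENNReal.ofReal_add (by linarith) h0]
    norm_num
  · intro f hf
    exact ((hp.2 f hf).smul_measure ENNReal.ofReal_ne_top).add_measure
      ((hq.2 f hf).smul_measure ENNReal.ofReal_ne_top)

lemma mix_zero (p q : Measure X) : mix p q 0 = p := by simp [mix]

lemma mix_one (p q : Measure X) : mix p q 1 = q := by simp [mix]

lemma mix_comm (p q : Measure X) (l : ℝ) : mix p q l = mix q p (1 - l) := by
  rw [mix, mix, sub_sub_cancel, add_comm]

lemma mix_self {p : Measure X} {l : ℝ} (h0 : 0 ≤ l) (h1 : l ≤ 1) : mix p p l = p := by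
  rw [mix, ← add_smul, ← ENNReal.ofReal_add (by linarith) h0]
  norm_num

lemma mix_mix {c d : Measure X} {s t l : ℝ} (hs0 : 0 ≤ s) (hs1 : s ≤ 1)
    (ht0 : 0 ≤ t) (ht1 : t ≤ 1) (hl0 : 0 ≤ l) (hl1 : l ≤ 1) :
    mix (mix c d s) (mix c d t) l = mix c d ((1 - l) * s + l * t) := by
  rw [mix, mix, mix, mix, smul_add, smul_add, smul_smul, smul_smul, smul_smul, smul_smul,
    ← ENNReal.ofReal_mul (by linarith), ← ENNReal.ofReal_mul (by linarith),
    ← ENNReal.ofReal_mul hl0, ← ENNReal.ofReal_mul hl0, add_add_add_comm,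
    ← add_smul, ← add_smul, ← ENNReal.ofReal_add (by nlinarith) (by nlinarith),
    ← ENNReal.ofReal_add (by nlinarith) (by nlinarith)]
  congr 2 <;> ring

lemma integral_mix {p q : Measure X} {f : X → ℝ} (hfp : Integrable f p)
    (hfq : Integrable f q) {l : ℝ} (h0 : 0 ≤ l) (h1 : l ≤ 1) :
    ∫ x, f x ∂(mix p q l) = (1 - l) * ∫ x, f x ∂p + l * ∫ x, f x ∂q := by
  rw [mix, integral_add_measure (hfp.smul_measure ENNReal.ofReal_ne_top)
      (hfq.smul_measure ENNReal.ofReal_ne_top), integral_smul_measure, integral_smul_measure,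
    ENNReal.toReal_ofReal h0, ENNReal.toReal_ofReal (by linarith), smul_eq_mul, smul_eq_mul]

instance lipsub_nonempty : Nonempty {f : X → ℝ // LipschitzWith 1 f} :=
  ⟨⟨fun _ => 0, (LipschitzWith.const 0).weaken zero_le_one⟩⟩

lemma w1_bddAbove {p q : Measure X} (hp : MemDelta1 p) (hq : MemDelta1 q) :
    BddAbove (Set.range fun f : {f : X → ℝ // LipschitzWith 1 f} =>
      |∫ x, f.1 x ∂p - ∫ x, f.1 x ∂q|) := by
  obtain ⟨x₀⟩ := memDelta1_nonempty hp
  refine ⟨∫ x, dist x x₀ ∂p + ∫ x, dist x x₀ ∂q, ?_⟩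
  rintro - ⟨f, rfl⟩
  have habs : ∀ x, |f.1 x - f.1 x₀| ≤ dist x x₀ := fun x => by
    have := f.2.dist_le_mul x x₀
    rwa [NNReal.coe_one, one_mul, Real.dist_eq] at this
  have key : ∀ (μ : Measure X), MemDelta1 μ →
      ∫ x, f.1 x ∂μ = (∫ x, (f.1 x - f.1 x₀) ∂μ) + f.1 x₀ := by
    intro μ hμ
    have hi : Integrable f.1 μ := lip_integrable hμ f.2
    have := hμ.1
    rw [integral_sub hi (integrable_const _), integral_const]
    simp [hμ.1.measure_univ]
  show |∫ x, f.1 x ∂p - ∫ x, f.1 x ∂q| ≤ _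
  rw [key p hp, key q hq]
  haveI := hp.1; haveI := hq.1
  have hip : Integrable (fun x => f.1 x - f.1 x₀) p :=
    (lip_integrable hp f.2).sub (integrable_const _)
  have hiq : Integrable (fun x => f.1 x - f.1 x₀) q :=
    (lip_integrable hq f.2).sub (integrable_const _)
  calc |(∫ x, (f.1 x - f.1 x₀) ∂p + f.1 x₀) - (∫ x, (f.1 x - f.1 x₀) ∂q + f.1 x₀)|
      = |∫ x, (f.1 x - f.1 x₀) ∂p - ∫ x, (f.1 x - f.1 x₀) ∂q| := by
        congr 1; ring
    _ ≤ |∫ x, (f.1 x - f.1 x₀) ∂p| + |∫ x, (f.1 x - f.1 x₀) ∂q| := abs_sub _ _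
    _ ≤ ∫ x, dist x x₀ ∂p + ∫ x, dist x x₀ ∂q := by
        gcongr
        · refine le_trans ?_ (integral_mono hip.abs (dist_integrable hp x₀) habs)
          simpa [Real.norm_eq_abs] using
            norm_integral_le_integral_norm (μ := p) (fun x => f.1 x - f.1 x₀)
        · refine le_trans ?_ (integral_mono hiq.abs (dist_integrable hq x₀) habs)
          simpa [Real.norm_eq_abs] using
            norm_integral_le_integral_norm (μ := q) (fun x => f.1 x - f.1 x₀)

end Stmt13
section P2
open MeasureTheory Filter
namespace Stmt13
set_option linter.unusedSectionVars false

variable {X : Type*} [MetricSpace X] [MeasurableSpace X]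

lemma le_w1 {p q : Measure X} (hp : MemDelta1 p) (hq : MemDelta1 q) {f : X → ℝ}
    (hf : LipschitzWith 1 f) : |∫ x, f x ∂p - ∫ x, f x ∂q| ≤ W1 p q :=
  le_ciSup (w1_bddAbove hp hq) (⟨f, hf⟩ : {f : X → ℝ // LipschitzWith 1 f})

lemma w1_nonneg {p q : Measure X} (hp : MemDelta1 p) (hq : MemDelta1 q) : 0 ≤ W1 p q := by
  have := le_w1 hp hq ((LipschitzWith.const (0:ℝ)).weaken zero_le_one)
  simpa using this

lemma w1_le {p q : Measure X} {B : ℝ}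
    (hB : ∀ f : X → ℝ, LipschitzWith 1 f → |∫ x, f x ∂p - ∫ x, f x ∂q| ≤ B) :
    W1 p q ≤ B := ciSup_le fun f => hB f.1 f.2

lemma dirac_memDelta1 [BorelSpace X] (x : X) : MemDelta1 (Measure.dirac x) := by
  refine ⟨inferInstance, ?_⟩
  rintro f ⟨K, hf⟩
  have hm : StronglyMeasurable f := hf.continuous.stronglyMeasurable
  refine ⟨hm.aestronglyMeasurable, ?_⟩
  rw [HasFiniteIntegral, lintegral_dirac' x hm.measurable.enorm]
  exact enorm_lt_top

lemma w1_dirac_le [BorelSpace X] (x y : X) :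
    W1 (Measure.dirac x) (Measure.dirac y) ≤ dist x y := by
  refine w1_le fun f hf => ?_
  rw [integral_dirac, integral_dirac]
  have := hf.dist_le_mul x y
  rwa [NNReal.coe_one, one_mul, Real.dist_eq] at this

end Stmt13
end P2
section P3
open MeasureTheory Filter
namespace Stmt13
set_option linter.unusedSectionVars false

variable {X : Type*} [MetricSpace X] [MeasurableSpace X]

/-- Bundle of the preorder hypotheses. -/
structure Nice (R : Measure X → Measure X → Prop) : Prop where
  refl : ∀ p : Measure X, MemDelta1 p → R p p
  trans : ∀ p q r : Measure X, MemDelta1 p → MemDelta1 q → MemDelta1 r →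
    R p q → R q r → R p r
  total : ∀ p q : Measure X, MemDelta1 p → MemDelta1 q → R p q ∨ R q p
  lip : LipschitzPre R
  aff : AffinePre R

variable {R : Measure X → Measure X → Prop}

lemma strict_imp (h : Nice R) {p q : Measure X} (hp : MemDelta1 p) (hq : MemDelta1 q)
    (hs : ¬ R q p) : R p q := (h.total p q hp hq).resolve_right hs

/-- Indifference. -/
def Ind (R : Measure X → Measure X → Prop) (p q : Measure X) : Prop := R p q ∧ R q p

lemma ind_trans (h : Nice R) {p q r : Measure X} (hp : MemDelta1 p) (hq : MemDelta1 q)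
    (hr : MemDelta1 r) (h1 : Ind R p q) (h2 : Ind R q r) : Ind R p r :=
  ⟨h.trans p q r hp hq hr h1.1 h2.1, h.trans r q p hr hq hp h2.2 h1.2⟩

lemma ind_mix_left (h : Nice R) {p p' r : Measure X} (hp : MemDelta1 p) (hp' : MemDelta1 p')
    (hr : MemDelta1 r) {l : ℝ} (h0 : 0 ≤ l) (h1 : l ≤ 1) (hi : Ind R p p') :
    Ind R (mix p r l) (mix p' r l) := by
  rcases eq_or_lt_of_le h1 with h1 | h1
  · subst h1; rw [mix_one, mix_one]; exact ⟨h.refl r hr, h.refl r hr⟩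
  · exact ⟨(h.aff p p' r hp hp' hr l h0 h1).mp hi.1, (h.aff p' p r hp' hp hr l h0 h1).mp hi.2⟩

lemma ind_mix_right (h : Nice R) {p r r' : Measure X} (hp : MemDelta1 p) (hr : MemDelta1 r)
    (hr' : MemDelta1 r') {l : ℝ} (h0 : 0 ≤ l) (h1 : l ≤ 1) (hi : Ind R r r') :
    Ind R (mix p r l) (mix p r' l) := by
  rw [mix_comm p r l, mix_comm p r' l]
  exact ind_mix_left h hr hr' hp (by linarith) (by linarith) hi

lemma weak_mix_left (h : Nice R) {p p' r : Measure X} (hp : MemDelta1 p) (hp' : MemDelta1 p')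
    (hr : MemDelta1 r) {l : ℝ} (h0 : 0 ≤ l) (h1 : l ≤ 1) (hi : R p p') :
    R (mix p r l) (mix p' r l) := by
  rcases eq_or_lt_of_le h1 with h1 | h1
  · subst h1; rw [mix_one, mix_one]; exact h.refl r hr
  · exact (h.aff p p' r hp hp' hr l h0 h1).mp hi

/-- If both `p` and `q` are weakly above `c`, then so is any mixture. -/
lemma mix_above (h : Nice R) {p q c : Measure X} (hp : MemDelta1 p) (hq : MemDelta1 q)
    (hc : MemDelta1 c) {l : ℝ} (h0 : 0 ≤ l) (h1 : l ≤ 1) (h1c : R p c) (h2c : R q c) :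
    R (mix p q l) c := by
  have hmem := mix_memDelta1 hp hq h0 h1
  have hstep1 : R (mix p q l) (mix c q l) := weak_mix_left h hp hc hq h0 h1 h1c
  have hstep2 : R (mix c q l) c := by
    rw [mix_comm c q l]
    have := weak_mix_left h hq hc hc (by linarith : (0:ℝ) ≤ 1 - l) (by linarith) h2c
    rwa [mix_self (by linarith) (by linarith)] at this
  exact h.trans _ _ _ hmem (mix_memDelta1 hc hq h0 h1) hc hstep1 hstep2

lemma mix_below (h : Nice R) {p q d : Measure X} (hp : MemDelta1 p) (hq : MemDelta1 q)
    (hd : MemDelta1 d) {l : ℝ} (h0 : 0 ≤ l) (h1 : l ≤ 1) (h1d : R d p) (h2d : R d q) :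
    R d (mix p q l) := by
  have hmem := mix_memDelta1 hp hq h0 h1
  have hstep1 : R (mix d q l) (mix p q l) := weak_mix_left h hd hp hq h0 h1 h1d
  have hstep2 : R d (mix d q l) := by
    rw [mix_comm d q l]
    have := weak_mix_left h hd hq hd (by linarith : (0:ℝ) ≤ 1 - l) (by linarith) h2d
    rwa [mix_self (by linarith) (by linarith)] at this
  exact h.trans _ _ _ hd (mix_memDelta1 hd hq h0 h1) hmem hstep2 hstep1

lemma seg_d_strict (h : Nice R) {c d : Measure X} (hc : MemDelta1 c) (hd : MemDelta1 d)
    (hcd : ¬ R c d) {s : ℝ} (h0 : 0 ≤ s) (h1 : s < 1) : ¬ R (mix c d s) d := by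
  have := (not_congr (h.aff c d d hc hd hd s h0 h1)).mp hcd
  rwa [mix_self h0 (le_of_lt h1)] at this

lemma seg_mono_strict (h : Nice R) {c d : Measure X} (hc : MemDelta1 c) (hd : MemDelta1 d)
    (hcd : ¬ R c d) {s t : ℝ} (hs0 : 0 ≤ s) (hst : s < t) (ht1 : t ≤ 1) :
    ¬ R (mix c d s) (mix c d t) := by
  have hs1 : s < 1 := lt_of_lt_of_le hst ht1
  set l := (t - s) / (1 - s) with hl
  have hl0 : 0 < l := div_pos (by linarith) (by linarith)
  have hl1 : l ≤ 1 := by rw [div_le_one (by linarith)]; linarith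
  have hms : MemDelta1 (mix c d s) := mix_memDelta1 hc hd hs0 (le_of_lt hs1)
  have hid : mix (mix c d s) d l = mix c d t := by
    calc mix (mix c d s) d l = mix (mix c d s) (mix c d 1) l := by rw [mix_one]
      _ = mix c d ((1 - l) * s + l * 1) := mix_mix hs0 (le_of_lt hs1) zero_le_one le_rfl
            (le_of_lt hl0) hl1
      _ = mix c d t := by
          have hne : (1:ℝ) - s ≠ 0 := by linarith
          congr 1
          rw [hl]
          field_simp
          ring
  have h1 : ¬ R (mix c d s) d := seg_d_strict h hc hd hcd hs0 hs1
  have h2 := (not_congr (h.aff (mix c d s) d (mix c d s) hms hd hms (1 - l)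
    (by linarith) (by linarith))).mp h1
  rw [mix_self (by linarith) (by linarith), ← mix_comm] at h2
  rwa [hid] at h2

lemma seg_mono_weak (h : Nice R) {c d : Measure X} (hc : MemDelta1 c) (hd : MemDelta1 d)
    (hcd : ¬ R c d) {s t : ℝ} (hs0 : 0 ≤ s) (hst : s ≤ t) (ht1 : t ≤ 1) :
    R (mix c d t) (mix c d s) := by
  rcases eq_or_lt_of_le hst with h' | h'
  · subst h'; exact h.refl _ (mix_memDelta1 hc hd hs0 ht1)
  · exact strict_imp h (mix_memDelta1 hc hd (by linarith) ht1)
      (mix_memDelta1 hc hd hs0 (by linarith)) (seg_mono_strict h hc hd hcd hs0 h' ht1)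

lemma open_strict_r (h : Nice R) {p q r : Measure X} (hp : MemDelta1 p) (hq : MemDelta1 q)
    (hr : MemDelta1 r) (hs : ¬ R q p) :
    ∃ ε > 0, ∀ l, 0 ≤ l → l < ε → ¬ R q (mix p r l) := by
  obtain ⟨K, hK, hcon⟩ := h.lip p q hp hq hs
  have hW : 0 ≤ W1 r q := w1_nonneg hr hq
  refine ⟨min (K / (K + W1 r q)) 1, lt_min (div_pos hK (by linarith)) one_pos, ?_⟩
  intro l h0 hl
  have := hcon r q hr hq l h0 (lt_of_lt_of_le hl (min_le_left _ _))
  rwa [mix_self h0 (le_of_lt (lt_of_lt_of_le hl (min_le_right _ _)))] at this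

lemma open_strict_l (h : Nice R) {p q r : Measure X} (hp : MemDelta1 p) (hq : MemDelta1 q)
    (hr : MemDelta1 r) (hs : ¬ R q p) :
    ∃ ε > 0, ∀ l, 0 ≤ l → l < ε → ¬ R (mix q r l) p := by
  obtain ⟨K, hK, hcon⟩ := h.lip p q hp hq hs
  have hW : 0 ≤ W1 p r := w1_nonneg hp hr
  refine ⟨min (K / (K + W1 p r)) 1, lt_min (div_pos hK (by linarith)) one_pos, ?_⟩
  intro l h0 hl
  have := hcon p r hp hr l h0 (lt_of_lt_of_le hl (min_le_left _ _))
  rwa [mix_self h0 (le_of_lt (lt_of_lt_of_le hl (min_le_right _ _)))] at this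

end Stmt13
end P3
section P4
open MeasureTheory Filter
namespace Stmt13
set_option linter.unusedSectionVars false

variable {X : Type*} [MetricSpace X] [MeasurableSpace X]
variable {R : Measure X → Measure X → Prop}

lemma calib (h : Nice R) {c d p : Measure X} (hc : MemDelta1 c) (hd : MemDelta1 d)
    (hp : MemDelta1 p) (hcd : ¬ R c d) (hpc : R p c) (hdp : R d p) :
    ∃ t, 0 ≤ t ∧ t ≤ 1 ∧ Ind R p (mix c d t) := by
  set A := {t : ℝ | 0 ≤ t ∧ t ≤ 1 ∧ R p (mix c d t)} with hA
  have h0A : (0:ℝ) ∈ A := ⟨le_refl 0, zero_le_one, by rw [mix_zero]; exact hpc⟩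
  have hbdd : BddAbove A := ⟨1, fun t ht => ht.2.1⟩
  set t₀ := sSup A with ht₀
  have ht00 : 0 ≤ t₀ := le_csSup hbdd h0A
  have ht01 : t₀ ≤ 1 := csSup_le ⟨0, h0A⟩ fun t ht => ht.2.1
  have hm : MemDelta1 (mix c d t₀) := mix_memDelta1 hc hd ht00 ht01
  refine ⟨t₀, ht00, ht01, ?_, ?_⟩
  · -- R p (mix c d t₀)
    by_contra hns
    have ht0pos : 0 < t₀ := by
      rcases eq_or_lt_of_le ht00 with h' | h'
      · exfalso; rw [← h', mix_zero] at hns; exact hns hpc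
      · exact h'
    obtain ⟨ε, hε, hcon⟩ := open_strict_r h hm hp hc hns
    set l := min (ε/2) (1/2) with hldef
    have hl0 : 0 < l := lt_min (by linarith) (by norm_num)
    have hlε : l < ε := lt_of_le_of_lt (min_le_left _ _) (by linarith)
    have hl1 : l < 1 := lt_of_le_of_lt (min_le_right _ _) (by norm_num)
    have hid : mix (mix c d t₀) c l = mix c d ((1 - l) * t₀) := by
      calc mix (mix c d t₀) c l = mix (mix c d t₀) (mix c d 0) l := by rw [mix_zero]
        _ = mix c d ((1 - l) * t₀ + l * 0) := mix_mix ht00 ht01 le_rfl zero_le_one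
              (le_of_lt hl0) (le_of_lt hl1)
        _ = mix c d ((1 - l) * t₀) := by rw [mul_zero, add_zero]
    have hcon' := hcon l (le_of_lt hl0) hlε
    rw [hid] at hcon'
    have hlt : (1 - l) * t₀ < t₀ := by nlinarith
    obtain ⟨s, hsA, hs⟩ := exists_lt_of_lt_csSup ⟨0, h0A⟩ hlt
    have h1t0 : 0 ≤ (1 - l) * t₀ := by nlinarith
    exact hcon' (h.trans p (mix c d s) (mix c d ((1 - l) * t₀)) hp
      (mix_memDelta1 hc hd hsA.1 hsA.2.1) (mix_memDelta1 hc hd h1t0 (by nlinarith))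
      hsA.2.2 (seg_mono_weak h hc hd hcd h1t0 (le_of_lt hs) hsA.2.1))
  · -- R (mix c d t₀) p
    by_contra hns
    have ht0lt1 : t₀ < 1 := by
      rcases eq_or_lt_of_le ht01 with h' | h'
      · exfalso; rw [h', mix_one] at hns; exact hns hdp
      · exact h'
    obtain ⟨ε, hε, hcon⟩ := open_strict_l h hp hm hd hns
    set l := min (ε/2) (1/2) with hldef
    have hl0 : 0 < l := lt_min (by linarith) (by norm_num)
    have hlε : l < ε := lt_of_le_of_lt (min_le_left _ _) (by linarith)
    have hl1 : l < 1 := lt_of_le_of_lt (min_le_right _ _) (by norm_num)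
    have hid : mix (mix c d t₀) d l = mix c d ((1 - l) * t₀ + l) := by
      calc mix (mix c d t₀) d l = mix (mix c d t₀) (mix c d 1) l := by rw [mix_one]
        _ = mix c d ((1 - l) * t₀ + l * 1) := mix_mix ht00 ht01 zero_le_one le_rfl
              (le_of_lt hl0) (le_of_lt hl1)
        _ = mix c d ((1 - l) * t₀ + l) := by rw [mul_one]
    have hcon' := hcon l (le_of_lt hl0) hlε
    rw [hid] at hcon'
    have hnn : 0 ≤ (1 - l) * t₀ + l := by nlinarith
    have hle1 : (1 - l) * t₀ + l ≤ 1 := by nlinarith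
    have hmem : ((1 - l) * t₀ + l) ∈ A :=
      ⟨hnn, hle1, strict_imp h hp (mix_memDelta1 hc hd hnn hle1) hcon'⟩
    have := le_csSup hbdd hmem
    nlinarith

lemma calib_unique (h : Nice R) {c d p : Measure X} (hc : MemDelta1 c) (hd : MemDelta1 d)
    (hp : MemDelta1 p) (hcd : ¬ R c d) {s t : ℝ}
    (hs0 : 0 ≤ s) (hs1 : s ≤ 1) (hs : Ind R p (mix c d s))
    (ht0 : 0 ≤ t) (ht1 : t ≤ 1) (ht : Ind R p (mix c d t)) : s = t := by
  by_contra hne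
  rcases lt_or_gt_of_ne hne with h' | h'
  · refine seg_mono_strict h hc hd hcd hs0 h' ht1 ?_
    exact h.trans _ p _ (mix_memDelta1 hc hd hs0 hs1) hp (mix_memDelta1 hc hd ht0 ht1)
      hs.2 ht.1
  · refine seg_mono_strict h hc hd hcd ht0 h' hs1 ?_
    exact h.trans _ p _ (mix_memDelta1 hc hd ht0 ht1) hp (mix_memDelta1 hc hd hs0 hs1)
      ht.2 hs.1

/-- Strict comparison of calibration values. -/
lemma calib_lt (h : Nice R) {c d x y : Measure X} (hc : MemDelta1 c) (hd : MemDelta1 d)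
    (hx : MemDelta1 x) (hy : MemDelta1 y) (hcd : ¬ R c d) (hxy : ¬ R y x)
    {tx ty : ℝ} (htx0 : 0 ≤ tx) (htx1 : tx ≤ 1) (hcx : Ind R x (mix c d tx))
    (hty0 : 0 ≤ ty) (hty1 : ty ≤ 1) (hcy : Ind R y (mix c d ty)) : ty < tx := by
  by_contra hle
  push_neg at hle
  have h1 : R (mix c d ty) (mix c d tx) := seg_mono_weak h hc hd hcd htx0 hle hty1
  have hmx := mix_memDelta1 hc hd htx0 htx1
  have hmy := mix_memDelta1 hc hd hty0 hty1
  exact hxy (h.trans y (mix c d ty) x hy hmy hx hcy.1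
    (h.trans (mix c d ty) (mix c d tx) x hmy hmx hx h1 hcx.2))

/-- Weak comparison from calibration values. -/
lemma calib_le (h : Nice R) {c d x y : Measure X} (hc : MemDelta1 c) (hd : MemDelta1 d)
    (hx : MemDelta1 x) (hy : MemDelta1 y) (hcd : ¬ R c d)
    {tx ty : ℝ} (htx0 : 0 ≤ tx) (htx1 : tx ≤ 1) (hcx : Ind R x (mix c d tx))
    (hty0 : 0 ≤ ty) (hty1 : ty ≤ 1) (hcy : Ind R y (mix c d ty)) :
    (R x y ↔ ty ≤ tx) := by
  have hmx := mix_memDelta1 hc hd htx0 htx1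
  have hmy := mix_memDelta1 hc hd hty0 hty1
  constructor
  · intro hR
    by_contra hlt
    push_neg at hlt
    refine seg_mono_strict h hc hd hcd htx0 hlt hty1 ?_
    exact h.trans _ x _ hmx hx hmy hcx.2 (h.trans x y (mix c d ty) hx hy hmy hR hcy.1)
  · intro hle
    have h1 : R (mix c d tx) (mix c d ty) := seg_mono_weak h hc hd hcd hty0 hle htx1
    exact h.trans x (mix c d tx) y hx hmx hy hcx.1
      (h.trans (mix c d tx) (mix c d ty) y hmx hmy hy h1 hcy.2)

/-- Transfer of calibration to a larger bracket. -/
lemma calib_transfer (h : Nice R) {c d c' d' x : Measure X}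
    (hc : MemDelta1 c) (hd : MemDelta1 d) (hc' : MemDelta1 c') (hd' : MemDelta1 d')
    (hx : MemDelta1 x) {t γ δ : ℝ}
    (ht0 : 0 ≤ t) (ht1 : t ≤ 1) (hγ0 : 0 ≤ γ) (hγ1 : γ ≤ 1) (hδ0 : 0 ≤ δ) (hδ1 : δ ≤ 1)
    (hxt : Ind R x (mix c d t)) (hcγ : Ind R c (mix c' d' γ)) (hdδ : Ind R d (mix c' d' δ)) :
    Ind R x (mix c' d' ((1 - t) * γ + t * δ)) := by
  have hmγ := mix_memDelta1 hc' hd' hγ0 hγ1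
  have hmδ := mix_memDelta1 hc' hd' hδ0 hδ1
  have hmcd := mix_memDelta1 hc hd ht0 ht1
  have h1 : Ind R (mix c d t) (mix (mix c' d' γ) d t) :=
    ind_mix_left h hc hmγ hd ht0 ht1 hcγ
  have h2 : Ind R (mix (mix c' d' γ) d t) (mix (mix c' d' γ) (mix c' d' δ) t) :=
    ind_mix_right h hmγ hd hmδ ht0 ht1 hdδ
  have h3 : mix (mix c' d' γ) (mix c' d' δ) t = mix c' d' ((1 - t) * γ + t * δ) :=
    mix_mix hγ0 hγ1 hδ0 hδ1 ht0 ht1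
  rw [h3] at h2
  have hnn : 0 ≤ (1 - t) * γ + t * δ := by nlinarith
  have hle : (1 - t) * γ + t * δ ≤ 1 := by nlinarith
  have hm2 := mix_memDelta1 hc' hd' hnn hle
  exact ind_trans h hx hmcd hm2 hxt
    (ind_trans h hmcd (mix_memDelta1 hmγ hd ht0 ht1) hm2 h1 h2)

lemma exists_min2 (h : Nice R) {p q : Measure X} (hp : MemDelta1 p) (hq : MemDelta1 q) :
    ∃ c, MemDelta1 c ∧ R p c ∧ R q c := by
  rcases h.total p q hp hq with h' | h'
  · exact ⟨q, hq, h', h.refl q hq⟩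
  · exact ⟨p, hp, h.refl p hp, h'⟩

lemma exists_max2 (h : Nice R) {p q : Measure X} (hp : MemDelta1 p) (hq : MemDelta1 q) :
    ∃ d, MemDelta1 d ∧ R d p ∧ R d q := by
  rcases h.total p q hp hq with h' | h'
  · exact ⟨p, hp, h.refl p hp, h'⟩
  · exact ⟨q, hq, h', h.refl q hq⟩

/-- Existence of a common bracket for four measures. -/
lemma exists_bracket (h : Nice R) {p₁ p₂ p₃ p₄ : Measure X}
    (h1 : MemDelta1 p₁) (h2 : MemDelta1 p₂) (h3 : MemDelta1 p₃) (h4 : MemDelta1 p₄) :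
    ∃ c d, MemDelta1 c ∧ MemDelta1 d ∧
      (R p₁ c ∧ R p₂ c ∧ R p₃ c ∧ R p₄ c) ∧ (R d p₁ ∧ R d p₂ ∧ R d p₃ ∧ R d p₄) := by
  obtain ⟨e, he, he1, he2⟩ := exists_min2 h h1 h2
  obtain ⟨e', he', he1', he2'⟩ := exists_min2 h h3 h4
  obtain ⟨c, hc, hc1, hc2⟩ := exists_min2 h he he'
  obtain ⟨f, hf, hf1, hf2⟩ := exists_max2 h h1 h2
  obtain ⟨f', hf', hf1', hf2'⟩ := exists_max2 h h3 h4
  obtain ⟨d, hd, hd1, hd2⟩ := exists_max2 h hf hf'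
  exact ⟨c, d, hc, hd,
    ⟨h.trans _ e c h1 he hc he1 hc1, h.trans _ e c h2 he hc he2 hc1,
     h.trans _ e' c h3 he' hc he1' hc2, h.trans _ e' c h4 he' hc he2' hc2⟩,
    ⟨h.trans d f _ hd hf h1 hd1 hf1, h.trans d f _ hd hf h2 hd1 hf2,
     h.trans d f' _ hd hf' h3 hd2 hf1', h.trans d f' _ hd hf' h4 hd2 hf2'⟩⟩

end Stmt13
end P4
section P5
open MeasureTheory Filter
namespace Stmt13
set_option linter.unusedSectionVars false

variable {X : Type*} [MetricSpace X] [MeasurableSpace X]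

open scoped Classical in
/-- The calibration value of `p` in the segment from `c` to `d`. -/
noncomputable def calVal (R : Measure X → Measure X → Prop) (c d p : Measure X) : ℝ :=
  if h : ∃ t, 0 ≤ t ∧ t ≤ 1 ∧ Ind R p (mix c d t) then h.choose else 0

open scoped Classical in
/-- A chosen bracket for `a`, `b`, `p`. -/
noncomputable def brk (R : Measure X → Measure X → Prop) (a b p : Measure X) :
    Measure X × Measure X :=
  if h : ∃ cd : Measure X × Measure X, MemDelta1 cd.1 ∧ MemDelta1 cd.2 ∧
      R a cd.1 ∧ R b cd.1 ∧ R p cd.1 ∧ R cd.2 a ∧ R cd.2 b ∧ R cd.2 p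
  then h.choose else (p, p)

/-- The global utility function. -/
noncomputable def Uval (R : Measure X → Measure X → Prop) (a b p : Measure X) : ℝ :=
  (calVal R (brk R a b p).1 (brk R a b p).2 p - calVal R (brk R a b p).1 (brk R a b p).2 b) /
  (calVal R (brk R a b p).1 (brk R a b p).2 a - calVal R (brk R a b p).1 (brk R a b p).2 b)

variable {R : Measure X → Measure X → Prop}

lemma calVal_mem (h : Nice R) {c d p : Measure X} (hc : MemDelta1 c) (hd : MemDelta1 d)
    (hp : MemDelta1 p) (hcd : ¬ R c d) (hpc : R p c) (hdp : R d p) :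
    0 ≤ calVal R c d p ∧ calVal R c d p ≤ 1 ∧ Ind R p (mix c d (calVal R c d p)) := by
  classical
  have hex := calib h hc hd hp hcd hpc hdp
  rw [calVal, dif_pos hex]
  exact hex.choose_spec

lemma brk_spec (h : Nice R) {a b p : Measure X} (ha : MemDelta1 a) (hb : MemDelta1 b)
    (hp : MemDelta1 p) :
    MemDelta1 (brk R a b p).1 ∧ MemDelta1 (brk R a b p).2 ∧
      R a (brk R a b p).1 ∧ R b (brk R a b p).1 ∧ R p (brk R a b p).1 ∧
      R (brk R a b p).2 a ∧ R (brk R a b p).2 b ∧ R (brk R a b p).2 p := by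
  classical
  obtain ⟨c, d, hc, hd, ⟨h1, h2, h3, -⟩, ⟨h5, h6, h7, -⟩⟩ := exists_bracket h ha hb hp hp
  have hex : ∃ cd : Measure X × Measure X, MemDelta1 cd.1 ∧ MemDelta1 cd.2 ∧
      R a cd.1 ∧ R b cd.1 ∧ R p cd.1 ∧ R cd.2 a ∧ R cd.2 b ∧ R cd.2 p :=
    ⟨(c, d), hc, hd, h1, h2, h3, h5, h6, h7⟩
  rw [brk, dif_pos hex]
  exact hex.choose_spec

set_option maxHeartbeats 2000000 in
/-- Master computation lemma: `Uval` agrees with any bracket computation. -/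
lemma Uval_eq (h : Nice R) {a b p c d : Measure X}
    (ha : MemDelta1 a) (hb : MemDelta1 b) (hp : MemDelta1 p)
    (hc : MemDelta1 c) (hd : MemDelta1 d) (hab : ¬ R b a)
    (hac : R a c) (hbc : R b c) (hpc : R p c) (hda : R d a) (hdb : R d b) (hdp : R d p)
    {ta tb tp : ℝ}
    (hta0 : 0 ≤ ta) (hta1 : ta ≤ 1) (hia : Ind R a (mix c d ta))
    (htb0 : 0 ≤ tb) (htb1 : tb ≤ 1) (hib : Ind R b (mix c d tb))
    (htp0 : 0 ≤ tp) (htp1 : tp ≤ 1) (hip : Ind R p (mix c d tp)) :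
    Uval R a b p = (tp - tb) / (ta - tb) := by
  obtain ⟨hB1, hB2, haB, hbB, hpB, hBa, hBb, hBp⟩ := brk_spec h ha hb hp
  set c₀ := (brk R a b p).1 with hc₀def
  set d₀ := (brk R a b p).2 with hd₀def
  have hcd : ¬ R c d := fun hRcd => hab
    (h.trans b d a hb hd ha (h.trans b c d hb hc hd hbc hRcd) hda)
  have hc₀d₀ : ¬ R c₀ d₀ := fun hRcd => hab
    (h.trans b d₀ a hb hB2 ha (h.trans b c₀ d₀ hb hB1 hB2 hbB hRcd) hBa)
  obtain ⟨c₁, d₁, hc₁, hd₁, ⟨hcc₁, hdc₁, hB1c₁, hB2c₁⟩, ⟨hd₁c, hd₁d, hd₁B1, hd₁B2⟩⟩ :=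
    exists_bracket h hc hd hB1 hB2
  have hc₁d₁ : ¬ R c₁ d₁ := fun hRcd => hab
    (h.trans b d₁ a hb hd₁ ha
      (h.trans b c₁ d₁ hb hc₁ hd₁ (h.trans b c c₁ hb hc hc₁ hbc hcc₁) hRcd)
      (h.trans d₁ d a hd₁ hd ha hd₁d hda))
  -- calibrations of the endpoints in the big bracket
  obtain ⟨γ, hγ0, hγ1, hiγ⟩ := calib h hc₁ hd₁ hc hc₁d₁ hcc₁ hd₁c
  obtain ⟨δ, hδ0, hδ1, hiδ⟩ := calib h hc₁ hd₁ hd hc₁d₁ hdc₁ hd₁d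
  obtain ⟨γ', hγ'0, hγ'1, hiγ'⟩ := calib h hc₁ hd₁ hB1 hc₁d₁ hB1c₁ hd₁B1
  obtain ⟨δ', hδ'0, hδ'1, hiδ'⟩ := calib h hc₁ hd₁ hB2 hc₁d₁ hB2c₁ hd₁B2
  have hγδ : γ < δ := calib_lt h hc₁ hd₁ hd hc hc₁d₁ hcd hδ0 hδ1 hiδ hγ0 hγ1 hiγ
  have hγ'δ' : γ' < δ' :=
    calib_lt h hc₁ hd₁ hB2 hB1 hc₁d₁ hc₀d₀ hδ'0 hδ'1 hiδ' hγ'0 hγ'1 hiγ'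
  -- calVal in the chosen bracket
  obtain ⟨hsp0, hsp1, hsp⟩ := calVal_mem h hB1 hB2 hp hc₀d₀ hpB hBp
  obtain ⟨hsa0, hsa1, hsa⟩ := calVal_mem h hB1 hB2 ha hc₀d₀ haB hBa
  obtain ⟨hsb0, hsb1, hsb⟩ := calVal_mem h hB1 hB2 hb hc₀d₀ hbB hBb
  set sp := calVal R c₀ d₀ p with hspdef
  set sa := calVal R c₀ d₀ a with hsadef
  set sb := calVal R c₀ d₀ b with hsbdef
  have hsba : sb < sa := calib_lt h hB1 hB2 ha hb hc₀d₀ hab hsa0 hsa1 hsa hsb0 hsb1 hsb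
  have htba : tb < ta := calib_lt h hc hd ha hb hcd hab hta0 hta1 hia htb0 htb1 hib
  -- transfers to the big bracket
  have Tp := calib_transfer h hc hd hc₁ hd₁ hp htp0 htp1 hγ0 hγ1 hδ0 hδ1 hip hiγ hiδ
  have Ta := calib_transfer h hc hd hc₁ hd₁ ha hta0 hta1 hγ0 hγ1 hδ0 hδ1 hia hiγ hiδ
  have Tb := calib_transfer h hc hd hc₁ hd₁ hb htb0 htb1 hγ0 hγ1 hδ0 hδ1 hib hiγ hiδ
  have Sp := calib_transfer h hB1 hB2 hc₁ hd₁ hp hsp0 hsp1 hγ'0 hγ'1 hδ'0 hδ'1 hsp hiγ' hiδ'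
  have Sa := calib_transfer h hB1 hB2 hc₁ hd₁ ha hsa0 hsa1 hγ'0 hγ'1 hδ'0 hδ'1 hsa hiγ' hiδ'
  have Sb := calib_transfer h hB1 hB2 hc₁ hd₁ hb hsb0 hsb1 hγ'0 hγ'1 hδ'0 hδ'1 hsb hiγ' hiδ'
  have Ep : (1 - sp) * γ' + sp * δ' = (1 - tp) * γ + tp * δ :=
    calib_unique h hc₁ hd₁ hp hc₁d₁ (by nlinarith) (by nlinarith) Sp (by nlinarith)
      (by nlinarith) Tp
  have Ea : (1 - sa) * γ' + sa * δ' = (1 - ta) * γ + ta * δ :=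
    calib_unique h hc₁ hd₁ ha hc₁d₁ (by nlinarith) (by nlinarith) Sa (by nlinarith)
      (by nlinarith) Ta
  have Eb : (1 - sb) * γ' + sb * δ' = (1 - tb) * γ + tb * δ :=
    calib_unique h hc₁ hd₁ hb hc₁d₁ (by nlinarith) (by nlinarith) Sb (by nlinarith)
      (by nlinarith) Tb
  have hL2 : δ' - γ' ≠ 0 := (sub_pos.2 hγ'δ').ne'
  unfold Uval
  rw [← hc₀def, ← hd₀def, ← hspdef, ← hsadef, ← hsbdef,
    div_eq_div_iff (sub_pos.2 hsba).ne' (sub_pos.2 htba).ne']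
  have h1 : (sp - sb) * (δ' - γ') = (tp - tb) * (δ - γ) := by linear_combination Ep - Eb
  have h2 : (sa - sb) * (δ' - γ') = (ta - tb) * (δ - γ) := by linear_combination Ea - Eb
  exact mul_right_cancel₀ hL2 (by linear_combination (ta - tb) * h1 - (tp - tb) * h2)

end Stmt13
end P5
section P6
open MeasureTheory Filter
namespace Stmt13
set_option linter.unusedSectionVars false
set_option linter.unusedVariables false

variable {X : Type*} [MetricSpace X] [MeasurableSpace X]
variable {R : Measure X → Measure X → Prop}

lemma Uval_rep (h : Nice R) {a b : Measure X} (ha : MemDelta1 a) (hb : MemDelta1 b)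
    (hab : ¬ R b a) {p q : Measure X} (hp : MemDelta1 p) (hq : MemDelta1 q) :
    R p q ↔ Uval R a b q ≤ Uval R a b p := by
  obtain ⟨c, d, hc, hd, ⟨h1, h2, h3, h4⟩, ⟨h5, h6, h7, h8⟩⟩ := exists_bracket h ha hb hp hq
  have hcd : ¬ R c d := fun hRcd => hab
    (h.trans b d a hb hd ha (h.trans b c d hb hc hd h2 hRcd) h5)
  obtain ⟨ta, hta0, hta1, hia⟩ := calib h hc hd ha hcd h1 h5
  obtain ⟨tb, htb0, htb1, hib⟩ := calib h hc hd hb hcd h2 h6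
  obtain ⟨tp, htp0, htp1, hip⟩ := calib h hc hd hp hcd h3 h7
  obtain ⟨tq, htq0, htq1, hiq⟩ := calib h hc hd hq hcd h4 h8
  have htba : tb < ta := calib_lt h hc hd ha hb hcd hab hta0 hta1 hia htb0 htb1 hib
  rw [Uval_eq h ha hb hp hc hd hab h1 h2 h3 h5 h6 h7 hta0 hta1 hia htb0 htb1 hib
      htp0 htp1 hip,
    Uval_eq h ha hb hq hc hd hab h1 h2 h4 h5 h6 h8 hta0 hta1 hia htb0 htb1 hib
      htq0 htq1 hiq,
    div_le_div_iff_of_pos_right (sub_pos.2 htba), sub_le_sub_iff_right]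
  exact calib_le h hc hd hp hq hcd htp0 htp1 hip htq0 htq1 hiq

lemma Uval_a (h : Nice R) {a b : Measure X} (ha : MemDelta1 a) (hb : MemDelta1 b)
    (hab : ¬ R b a) : Uval R a b a = 1 := by
  obtain ⟨c, d, hc, hd, ⟨h1, h2, -, -⟩, ⟨h5, h6, -, -⟩⟩ := exists_bracket h ha hb ha hb
  have hcd : ¬ R c d := fun hRcd => hab
    (h.trans b d a hb hd ha (h.trans b c d hb hc hd h2 hRcd) h5)
  obtain ⟨ta, hta0, hta1, hia⟩ := calib h hc hd ha hcd h1 h5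
  obtain ⟨tb, htb0, htb1, hib⟩ := calib h hc hd hb hcd h2 h6
  have htba : tb < ta := calib_lt h hc hd ha hb hcd hab hta0 hta1 hia htb0 htb1 hib
  rw [Uval_eq h ha hb ha hc hd hab h1 h2 h1 h5 h6 h5 hta0 hta1 hia htb0 htb1 hib
      hta0 hta1 hia]
  exact div_self (sub_pos.2 htba).ne'

lemma Uval_b (h : Nice R) {a b : Measure X} (ha : MemDelta1 a) (hb : MemDelta1 b)
    (hab : ¬ R b a) : Uval R a b b = 0 := by
  obtain ⟨c, d, hc, hd, ⟨h1, h2, -, -⟩, ⟨h5, h6, -, -⟩⟩ := exists_bracket h ha hb ha hb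
  have hcd : ¬ R c d := fun hRcd => hab
    (h.trans b d a hb hd ha (h.trans b c d hb hc hd h2 hRcd) h5)
  obtain ⟨ta, hta0, hta1, hia⟩ := calib h hc hd ha hcd h1 h5
  obtain ⟨tb, htb0, htb1, hib⟩ := calib h hc hd hb hcd h2 h6
  rw [Uval_eq h ha hb hb hc hd hab h1 h2 h2 h5 h6 h6 hta0 hta1 hia htb0 htb1 hib
      htb0 htb1 hib, sub_self, zero_div]

set_option maxHeartbeats 1000000 in
lemma Uval_affine (h : Nice R) {a b : Measure X} (ha : MemDelta1 a) (hb : MemDelta1 b)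
    (hab : ¬ R b a) {p q : Measure X} (hp : MemDelta1 p) (hq : MemDelta1 q)
    {l : ℝ} (h0 : 0 ≤ l) (h1 : l ≤ 1) :
    Uval R a b (mix p q l) = (1 - l) * Uval R a b p + l * Uval R a b q := by
  obtain ⟨c, d, hc, hd, ⟨hc1, hc2, hc3, hc4⟩, ⟨hd1, hd2, hd3, hd4⟩⟩ :=
    exists_bracket h ha hb hp hq
  have hcd : ¬ R c d := fun hRcd => hab
    (h.trans b d a hb hd ha (h.trans b c d hb hc hd hc2 hRcd) hd1)
  obtain ⟨ta, hta0, hta1, hia⟩ := calib h hc hd ha hcd hc1 hd1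
  obtain ⟨tb, htb0, htb1, hib⟩ := calib h hc hd hb hcd hc2 hd2
  obtain ⟨tp, htp0, htp1, hip⟩ := calib h hc hd hp hcd hc3 hd3
  obtain ⟨tq, htq0, htq1, hiq⟩ := calib h hc hd hq hcd hc4 hd4
  have htba : tb < ta := calib_lt h hc hd ha hb hcd hab hta0 hta1 hia htb0 htb1 hib
  have hmm : MemDelta1 (mix p q l) := mix_memDelta1 hp hq h0 h1
  have hmixc : R (mix p q l) c := mix_above h hp hq hc h0 h1 hc3 hc4
  have hdmix : R d (mix p q l) := mix_below h hp hq hd h0 h1 hd3 hd4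
  have hmtp := mix_memDelta1 hc hd htp0 htp1
  have hmtq := mix_memDelta1 hc hd htq0 htq1
  have himix : Ind R (mix p q l) (mix c d ((1 - l) * tp + l * tq)) := by
    have h1' : Ind R (mix p q l) (mix (mix c d tp) q l) :=
      ind_mix_left h hp hmtp hq h0 h1 hip
    have h2' : Ind R (mix (mix c d tp) q l) (mix (mix c d tp) (mix c d tq) l) :=
      ind_mix_right h hmtp hq hmtq h0 h1 hiq
    rw [mix_mix htp0 htp1 htq0 htq1 h0 h1] at h2'
    exact ind_trans h hmm (mix_memDelta1 hmtp hq h0 h1)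
      (mix_memDelta1 hc hd (by nlinarith) (by nlinarith)) h1' h2'
  rw [Uval_eq h ha hb hmm hc hd hab hc1 hc2 hmixc hd1 hd2 hdmix hta0 hta1 hia
      htb0 htb1 hib (by nlinarith) (by nlinarith) himix,
    Uval_eq h ha hb hp hc hd hab hc1 hc2 hc3 hd1 hd2 hd3 hta0 hta1 hia
      htb0 htb1 hib htp0 htp1 hip,
    Uval_eq h ha hb hq hc hd hab hc1 hc2 hc4 hd1 hd2 hd4 hta0 hta1 hia
      htb0 htb1 hib htq0 htq1 hiq]
  have hne : ta - tb ≠ 0 := (sub_pos.2 htba).ne'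
  field_simp
  ring

end Stmt13
end P6
section P7
open MeasureTheory Filter
namespace Stmt13
set_option linter.unusedSectionVars false
set_option linter.unusedVariables false

variable {X : Type*} [MetricSpace X] [MeasurableSpace X]
variable {R : Measure X → Measure X → Prop}

lemma w1_symm (p q : Measure X) : W1 p q = W1 q p := by
  unfold W1
  congr 1
  funext f
  rw [abs_sub_comm]

lemma Uval_lip (h : Nice R) {a b : Measure X} (ha : MemDelta1 a) (hb : MemDelta1 b)
    (hab : ¬ R b a) :
    ∃ K : ℝ, 0 < K ∧ ∀ p q : Measure X, MemDelta1 p → MemDelta1 q →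
      Uval R a b q - Uval R a b p ≤ W1 p q / K := by
  obtain ⟨K, hK, hcon⟩ := h.lip a b ha hb hab
  refine ⟨K, hK, ?_⟩
  intro p q hp hq
  by_contra hgt
  push_neg at hgt
  set W := W1 p q with hWdef
  have hW : 0 ≤ W := w1_nonneg hp hq
  set cg := Uval R a b q - Uval R a b p with hcgdef
  set c' := (W / K + cg) / 2 with hc'def
  have hc'1 : W / K < c' := by
    rw [hc'def]; linarith
  have hc'2 : c' < cg := by
    rw [hc'def]; linarith
  have hc'pos : 0 < c' := lt_of_le_of_lt (div_nonneg hW (le_of_lt hK)) hc'1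
  set l := 1 / (1 + c') with hldef
  have hl0 : 0 < l := by rw [hldef]; positivity
  have hl1 : l < 1 := by
    rw [hldef, div_lt_one (by linarith)]; linarith
  have hlth : l < K / (K + W) := by
    rw [hldef, div_lt_div_iff₀ (by linarith) (by linarith)]
    have : W < K * c' := by
      rw [div_lt_iff₀ hK] at hc'1; linarith
    linarith
  have hres := hcon p q hp hq l (le_of_lt hl0) hlth
  have hmap := mix_memDelta1 ha hp (le_of_lt hl0) (le_of_lt hl1)
  have hmbq := mix_memDelta1 hb hq (le_of_lt hl0) (le_of_lt hl1)
  have hR : R (mix a p l) (mix b q l) := strict_imp h hmap hmbq hres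
  have hle := (Uval_rep h ha hb hab hmap hmbq).mp hR
  rw [Uval_affine h ha hb hab ha hp (le_of_lt hl0) (le_of_lt hl1),
    Uval_affine h ha hb hab hb hq (le_of_lt hl0) (le_of_lt hl1),
    Uval_a h ha hb hab, Uval_b h ha hb hab] at hle
  -- hle : (1-l)*0 + l * Uval q ≤ (1-l)*1 + l * Uval p
  have hlc : l * (1 + c') = 1 := by
    rw [hldef]; field_simp
  nlinarith [hle, hc'2, hl0]

end Stmt13
end P7
section P8
open MeasureTheory Filter
open scoped ENNReal
namespace Stmt13
set_option linter.unusedSectionVars false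
set_option linter.unusedVariables false

variable {X : Type*} [MetricSpace X] [MeasurableSpace X] [BorelSpace X]
variable {R : Measure X → Measure X → Prop}

lemma fin_rep (h : Nice R) {a b : Measure X} (ha : MemDelta1 a) (hb : MemDelta1 b)
    (hab : ¬ R b a) :
    ∀ (n : ℕ) (w : Fin (n+1) → ℝ≥0∞) (c : Fin (n+1) → X), (∑ k, w k) = 1 →
      MemDelta1 (∑ k, w k • Measure.dirac (c k)) ∧
      Uval R a b (∑ k, w k • Measure.dirac (c k)) =
        ∑ k, (w k).toReal * Uval R a b (Measure.dirac (c k)) := by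
  intro n
  induction n with
  | zero =>
    intro w c hw
    have hw0 : w 0 = 1 := by simpa [Fin.sum_univ_one] using hw
    have hthis : (∑ k, w k • Measure.dirac (c k)) = Measure.dirac (c 0) := by
      rw [Fin.sum_univ_one, hw0, one_smul]
    rw [hthis, Fin.sum_univ_one, hw0]
    simp only [ENNReal.toReal_one, one_mul]
    exact ⟨dirac_memDelta1 (c 0), trivial⟩
  | succ n ih =>
    intro w c hw
    have hsum : (∑ k : Fin (n+1), w k.castSucc) + w (Fin.last (n+1)) = 1 := by
      rw [← Fin.sum_univ_castSucc (f := fun k : Fin (n+1+1) => w k)]; exact hw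
    have hwfin : ∀ k, w k ≤ 1 := by
      intro k
      rw [← hw]
      exact Finset.single_le_sum (fun i _ => zero_le) (Finset.mem_univ k)
    have hμ : (∑ k : Fin (n+2), w k • Measure.dirac (c k)) =
        (∑ k : Fin (n+1), w k.castSucc • Measure.dirac (c k.castSucc)) +
          w (Fin.last (n+1)) • Measure.dirac (c (Fin.last (n+1))) :=
      Fin.sum_univ_castSucc (fun k : Fin (n+1+1) => w k • Measure.dirac (c k))
    have hValSum : (∑ k : Fin (n+2), (w k).toReal * Uval R a b (Measure.dirac (c k))) =
        (∑ k : Fin (n+1), (w k.castSucc).toReal * Uval R a b (Measure.dirac (c k.castSucc)))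
          + (w (Fin.last (n+1))).toReal * Uval R a b (Measure.dirac (c (Fin.last (n+1)))) :=
      Fin.sum_univ_castSucc (fun k : Fin (n+1+1) => (w k).toReal * Uval R a b
        (Measure.dirac (c k)))
    set β := w (Fin.last (n+1)) with hβdef
    have hβtop : β ≠ ⊤ := ne_top_of_le_ne_top ENNReal.one_ne_top (hwfin _)
    have hsum' : (∑ k : Fin (n+1), w k.castSucc) = 1 - β := by
      rw [← hsum, ENNReal.add_sub_cancel_right hβtop]
    by_cases hβ0 : β = 0
    · -- last weight is zero
      have h1 : (∑ k : Fin (n+1), w k.castSucc) = 1 := by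
        rw [hβ0, add_zero] at hsum; exact hsum
      obtain ⟨hm, hU⟩ := ih (fun k => w k.castSucc) (fun k => c k.castSucc) h1
      rw [hμ, hβ0, zero_smul, add_zero, hValSum, hβ0]
      simp only [ENNReal.toReal_zero, zero_mul, add_zero]
      exact ⟨hm, hU⟩
    by_cases hβ1 : β = 1
    · -- last weight is one
      have h1 : (∑ k : Fin (n+1), w k.castSucc) = 0 := by
        rw [hsum', hβ1, tsub_self]
      have hz : ∀ k : Fin (n+1), w k.castSucc = 0 := fun k =>
        (Finset.sum_eq_zero_iff.mp h1) k (Finset.mem_univ k)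
      have hμ2 : (∑ k : Fin (n+2), w k • Measure.dirac (c k)) =
          Measure.dirac (c (Fin.last (n+1))) := by
        rw [hμ, hβ1, one_smul]
        have hzero : (∑ k : Fin (n+1), w k.castSucc • Measure.dirac (c k.castSucc)) = 0 :=
          Finset.sum_eq_zero fun k _ => by rw [hz k, zero_smul]
        rw [hzero, zero_add]
      have hzero2 : (∑ k : Fin (n+1), (w k.castSucc).toReal *
          Uval R a b (Measure.dirac (c k.castSucc))) = 0 :=
        Finset.sum_eq_zero fun k _ => by rw [hz k, ENNReal.toReal_zero, zero_mul]
      rw [hμ2, hValSum, hβ1, hzero2, zero_add]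
      simp only [ENNReal.toReal_one, one_mul]
      exact ⟨dirac_memDelta1 _, trivial⟩
    · -- main case : 0 < β < 1
      have hβlt : β < 1 := lt_of_le_of_ne (hwfin _) hβ1
      have h1β0 : (1:ℝ≥0∞) - β ≠ 0 := by
        simp only [ne_eq, tsub_eq_zero_iff_le, not_le]
        exact hβlt
      have h1βtop : (1:ℝ≥0∞) - β ≠ ⊤ :=
        ne_top_of_le_ne_top ENNReal.one_ne_top tsub_le_self
      set w' : Fin (n+1) → ℝ≥0∞ := fun k => w k.castSucc / (1 - β) with hw'def
      have hw'1 : (∑ k, w' k) = 1 := by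
        simp only [hw'def, div_eq_mul_inv]
        rw [← Finset.sum_mul, hsum', ENNReal.mul_inv_cancel h1β0 h1βtop]
      obtain ⟨hν'mem, hν'U⟩ := ih w' (fun k => c k.castSucc) hw'1
      set ν' := ∑ k : Fin (n+1), w' k • Measure.dirac (c k.castSucc) with hν'def
      set lam := β.toReal with hlamdef
      have hlam0 : 0 ≤ lam := ENNReal.toReal_nonneg
      have hlam1 : lam < 1 := by
        rw [hlamdef, ← ENNReal.toReal_one]
        exact (ENNReal.toReal_lt_toReal hβtop ENNReal.one_ne_top).mpr hβlt
      have h1βto : ((1:ℝ≥0∞) - β).toReal = 1 - lam := by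
        rw [hlamdef, ← ENNReal.toReal_one,
          ENNReal.toReal_sub_of_le (le_of_lt hβlt) ENNReal.one_ne_top]
      have hoflam : ENNReal.ofReal lam = β := by
        rw [hlamdef]; exact ENNReal.ofReal_toReal hβtop
      have hof1lam : ENNReal.ofReal (1 - lam) = 1 - β := by
        rw [← h1βto, ENNReal.ofReal_toReal h1βtop]
      have hmixeq : (∑ k : Fin (n+2), w k • Measure.dirac (c k)) =
          mix ν' (Measure.dirac (c (Fin.last (n+1)))) lam := by
        rw [mix, hoflam, hof1lam, hμ, hν'def, Finset.smul_sum]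
        congr 1
        refine Finset.sum_congr rfl fun k _ => ?_
        rw [smul_smul]
        congr 1
        simp only [hw'def]
        rw [ENNReal.mul_div_cancel h1β0 h1βtop]
      have hdmem := dirac_memDelta1 (c (Fin.last (n+1)))
      have hmmem : MemDelta1 (mix ν' (Measure.dirac (c (Fin.last (n+1)))) lam) :=
        mix_memDelta1 hν'mem hdmem hlam0 (le_of_lt hlam1)
      have hUaff := Uval_affine h ha hb hab hν'mem hdmem hlam0 (le_of_lt hlam1)
      constructor
      · rw [hmixeq]; exact hmmem
      · rw [hmixeq, hUaff, hν'U, hValSum, Finset.mul_sum]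
        congr 1
        refine Finset.sum_congr rfl fun k _ => ?_
        have h1lam : (1:ℝ) - lam ≠ 0 := by linarith
        simp only [hw'def, ENNReal.toReal_div, h1βto]
        field_simp

end Stmt13
end P8
section P9
open MeasureTheory Filter Topology Set
open scoped ENNReal
namespace Stmt13
set_option linter.unusedSectionVars false
set_option linter.unusedVariables false
set_option maxHeartbeats 1000000

variable {X : Type*} [MetricSpace X] [MeasurableSpace X] [BorelSpace X]
  [TopologicalSpace.SeparableSpace X]

lemma approx {p : Measure X} (hp : MemDelta1 p) {ε : ℝ} (hε : 0 < ε) :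
    ∃ (n : ℕ) (w : Fin (n+1) → ℝ≥0∞) (c : Fin (n+1) → X),
      (∑ k, w k) = 1 ∧ W1 p (∑ k, w k • Measure.dirac (c k)) ≤ 2 * ε := by
  classical
  haveI := hp.1
  haveI : Nonempty X := memDelta1_nonempty hp
  set xs := TopologicalSpace.denseSeq X with hxsdef
  have hdense : DenseRange xs := TopologicalSpace.denseRange_denseSeq X
  set x₀ := xs 0 with hx₀def
  set B : ℕ → Set X := fun n => ⋃ k ∈ Finset.range (n+1), Metric.ball (xs k) ε with hBdef
  have hBmeas : ∀ n, MeasurableSet (B n) := fun n =>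
    (Finset.range (n+1) : Finset ℕ).measurableSet_biUnion fun k _ => measurableSet_ball
  set F : ℕ → X → ℝ := fun n x => Set.indicator (B n)ᶜ (fun y => dist y x₀) x with hFdef
  have hFtend : Tendsto (fun n => ∫ x, F n x ∂p) atTop (nhds 0) := by
    have h0 : (0:ℝ) = ∫ x, (0:ℝ) ∂p := by simp
    rw [h0]
    apply tendsto_integral_of_dominated_convergence (fun x => dist x x₀)
    · intro n
      exact (((lip_dist x₀).continuous.stronglyMeasurable).indicator
        (hBmeas n).compl).aestronglyMeasurable
    · exact dist_integrable hp x₀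
    · intro n
      refine Eventually.of_forall fun x => ?_
      by_cases hx : x ∈ (B n)ᶜ
      · simp [hFdef, hx, Real.norm_eq_abs, abs_of_nonneg dist_nonneg]
      · simp [hFdef, hx, Real.norm_eq_abs, dist_nonneg]
    · refine Eventually.of_forall fun x => ?_
      obtain ⟨k, hk⟩ := (Metric.denseRange_iff.mp hdense) x ε hε
      have hev : (fun _ : ℕ => (0:ℝ)) =ᶠ[atTop] fun n => F n x := by
        refine eventually_atTop.2 ⟨k, fun n hn => ?_⟩
        have hxB : x ∈ B n := by
          rw [hBdef]
          exact Set.mem_biUnion (Finset.mem_range.mpr (by omega)) (Metric.mem_ball.mpr hk)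
        simp [hFdef, hxB]
      exact Tendsto.congr' hev tendsto_const_nhds
  obtain ⟨n, hn⟩ : ∃ n, ∫ x, F n x ∂p < ε := (hFtend.eventually_lt_const hε).exists
  -- classification map
  have hPex : ∀ x : X, ∃ k, (k ≤ n ∧ dist x (xs k) < ε) ∨ n < k := fun x =>
    ⟨n+1, Or.inr (by omega)⟩
  have hgmeas : Measurable (fun x => Nat.find (hPex x)) := by
    refine measurable_find hPex fun k => ?_
    by_cases hk : n < k
    · have : {x : X | (k ≤ n ∧ dist x (xs k) < ε) ∨ n < k} = Set.univ := by
        ext x; simp [hk]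
      rw [this]; exact MeasurableSet.univ
    · have : {x : X | (k ≤ n ∧ dist x (xs k) < ε) ∨ n < k} = Metric.ball (xs k) ε := by
        ext x; simp [hk, Metric.mem_ball, le_of_not_gt hk]
      rw [this]; exact measurableSet_ball
  set g : X → ℕ := fun x => Nat.find (hPex x) with hgdef
  have hgle : ∀ x, g x ≤ n + 1 := fun x => Nat.find_le (Or.inr (by omega))
  set cpts : Fin (n+2) → X := fun i => if i.val ≤ n then xs i.val else x₀ with hcptsdef
  set hfun : X → Fin (n+2) := fun x =>
    (fun m : ℕ => if hm : m ≤ n+1 then (⟨m, by omega⟩ : Fin (n+2)) else 0) (g x) with hhdef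
  have hhmeas : Measurable hfun := by
    have hm1 : Measurable fun m : ℕ =>
        (if hm : m ≤ n+1 then (⟨m, by omega⟩ : Fin (n+2)) else 0) := measurable_from_top
    exact hm1.comp hgmeas
  set T : X → X := fun x => cpts (hfun x) with hTdef
  have hTmeas : Measurable T := by
    have hm1 : Measurable cpts := measurable_from_top
    exact hm1.comp hhmeas
  have hgspec : ∀ x, (g x ≤ n ∧ dist x (xs (g x)) < ε) ∨ n < g x := fun x =>
    Nat.find_spec (hPex x)
  have hTval : ∀ x, (g x ≤ n ∧ T x = xs (g x)) ∨ (n < g x ∧ T x = x₀ ∧ x ∈ (B n)ᶜ) := by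
    intro x
    rcases hgspec x with ⟨h1, h2⟩ | h1
    · refine Or.inl ⟨h1, ?_⟩
      simp only [hTdef, hhdef, hcptsdef]
      rw [dif_pos (by omega : g x ≤ n + 1)]
      simp only []
      rw [if_pos h1]
    · refine Or.inr ⟨h1, ?_, ?_⟩
      · have hgx : g x = n + 1 := le_antisymm (hgle x) h1
        simp only [hTdef, hhdef, hcptsdef]
        rw [dif_pos (by omega : g x ≤ n + 1)]
        simp only []
        rw [if_neg (by omega)]
      · intro hxB
        rw [hBdef] at hxB
        obtain ⟨k, hk1, hk2⟩ := Set.mem_iUnion₂.mp hxB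
        have hkn : k ≤ n := by
          have := Finset.mem_range.mp hk1; omega
        have : Nat.find (hPex x) ≤ k := Nat.find_le (Or.inl ⟨hkn, Metric.mem_ball.mp hk2⟩)
        have h1' : n < Nat.find (hPex x) := h1
        omega
  have hTdist : ∀ x, dist x (T x) ≤ ε + F n x := by
    intro x
    rcases hTval x with ⟨h1, h2⟩ | ⟨h1, h2, h3⟩
    · rw [h2]
      have hind : 0 ≤ F n x := Set.indicator_nonneg (fun y _ => dist_nonneg) x
      have := (hgspec x).resolve_right (by omega)
      linarith [this.2]
    · rw [h2]
      have : F n x = dist x x₀ := by simp [hFdef, h3]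
      linarith
  -- the finitely supported approximation
  set w : Fin (n+2) → ℝ≥0∞ := fun i => p (hfun ⁻¹' {i}) with hwdef
  have hmeasfib : ∀ i : Fin (n+2), MeasurableSet (hfun ⁻¹' {i}) := fun i =>
    hhmeas (measurableSet_singleton i)
  have hdisj : Pairwise (Function.onFun Disjoint fun i : Fin (n+2) => hfun ⁻¹' {i}) := by
    intro i j hij
    simp only [Function.onFun, Set.disjoint_left]
    intro x hx1 hx2
    simp only [Set.mem_preimage, Set.mem_singleton_iff] at hx1 hx2
    exact hij (hx1 ▸ hx2.symm ▸ rfl)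
  have hw1 : (∑ i, w i) = 1 := by
    have huniv : (⋃ i : Fin (n+2), hfun ⁻¹' {i}) = Set.univ := by
      ext x
      simp only [Set.mem_iUnion, Set.mem_preimage, Set.mem_singleton_iff, Set.mem_univ,
        iff_true]
      exact ⟨hfun x, rfl⟩
    rw [← tsum_fintype (L := SummationFilter.unconditional _)]
    rw [hwdef]
    simp only []
    rw [← measure_iUnion hdisj hmeasfib, huniv, measure_univ]
  set ν := ∑ i : Fin (n+2), w i • Measure.dirac (cpts i) with hνdef
  have hνeq : Measure.map T p = ν := by
    ext s hs
    rw [Measure.map_apply hTmeas hs]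
    have hdecomp : T ⁻¹' s = ⋃ i : Fin (n+2), (hfun ⁻¹' {i}) ∩ T ⁻¹' s := by
      ext x
      simp only [Set.mem_iUnion, Set.mem_inter_iff, Set.mem_preimage, Set.mem_singleton_iff]
      exact ⟨fun hx => ⟨hfun x, rfl, hx⟩, fun ⟨i, _, hx⟩ => hx⟩
    rw [hdecomp, measure_iUnion
      (hdisj.mono fun i j hd => hd.mono Set.inter_subset_left Set.inter_subset_left)
      (fun i => (hmeasfib i).inter (hTmeas hs)), tsum_fintype]
    rw [hνdef, Measure.finset_sum_apply]
    refine Finset.sum_congr rfl fun i _ => ?_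
    rw [Measure.smul_apply, smul_eq_mul]
    by_cases hc : cpts i ∈ s
    · have : (hfun ⁻¹' {i}) ∩ T ⁻¹' s = hfun ⁻¹' {i} := by
        refine Set.inter_eq_self_of_subset_left fun x hx => ?_
        simp only [Set.mem_preimage, Set.mem_singleton_iff] at hx
        simp only [Set.mem_preimage, hTdef, hx]
        exact hc
      rw [this, Measure.dirac_apply_of_mem hc, mul_one]
    · have : (hfun ⁻¹' {i}) ∩ T ⁻¹' s = ∅ := by
        ext x
        simp only [Set.mem_inter_iff, Set.mem_preimage, Set.mem_singleton_iff,
          Set.mem_empty_iff_false, iff_false, not_and]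
        intro hx
        simp only [hTdef, hx]
        exact hc
      rw [this, measure_empty, Measure.dirac_apply' _ hs,
        Set.indicator_of_notMem hc, mul_zero]
  have hνW : W1 p ν ≤ 2 * ε := by
    refine w1_le fun f hf => ?_
    rw [← hνeq, integral_map hTmeas.aemeasurable
      hf.continuous.stronglyMeasurable.aestronglyMeasurable]
    have hfint : Integrable f p := lip_integrable hp hf
    have hfTint : Integrable (fun x => f (T x)) p := by
      refine ⟨(hf.continuous.stronglyMeasurable.comp_measurable hTmeas).aestronglyMeasurable,
        HasFiniteIntegral.of_bounded (C := ∑ i : Fin (n+2), |f (cpts i)|)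
          (Eventually.of_forall fun x => ?_)⟩
      have : T x = cpts (hfun x) := rfl
      rw [Real.norm_eq_abs, this]
      exact Finset.single_le_sum (f := fun i => |f (cpts i)|)
        (fun i _ => abs_nonneg _) (Finset.mem_univ (hfun x))
    have hsub : Integrable (fun x => f x - f (T x)) p := hfint.sub hfTint
    have hRHSint : Integrable (fun x => ε + F n x) p :=
      (integrable_const ε).add ((dist_integrable hp x₀).indicator (hBmeas n).compl)
    calc |∫ x, f x ∂p - ∫ x, f (T x) ∂p|
        = |∫ x, (f x - f (T x)) ∂p| := by rw [integral_sub hfint hfTint]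
      _ ≤ ∫ x, |f x - f (T x)| ∂p := by
          simpa [Real.norm_eq_abs] using
            norm_integral_le_integral_norm (μ := p) (fun x => f x - f (T x))
      _ ≤ ∫ x, (ε + F n x) ∂p := by
          refine integral_mono hsub.abs hRHSint fun x => ?_
          have hld := hf.dist_le_mul x (T x)
          rw [NNReal.coe_one, one_mul, Real.dist_eq] at hld
          exact le_trans hld (hTdist x)
      _ = ε + ∫ x, F n x ∂p := by
          rw [integral_add (integrable_const ε)
            ((dist_integrable hp x₀).indicator (hBmeas n).compl), integral_const]
          simp [measure_univ]
          rfl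
      _ ≤ 2 * ε := by linarith
  exact ⟨n + 1, w, cpts, hw1, hνW⟩

end Stmt13
end P9

section Main
open MeasureTheory Filter
open scoped ENNReal

set_option maxHeartbeats 1000000 in
theorem stmt13 {X : Type*} [MetricSpace X] [TopologicalSpace.SeparableSpace X]
    [MeasurableSpace X] [BorelSpace X]
    (R : Measure X → Measure X → Prop)
    (hrefl : ∀ p : Measure X, MemDelta1 p → R p p)
    (htrans : ∀ p q r : Measure X, MemDelta1 p → MemDelta1 q → MemDelta1 r →
      R p q → R q r → R p r)
    (htotal : ∀ p q : Measure X, MemDelta1 p → MemDelta1 q → R p q ∨ R q p)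
    (hlip : LipschitzPre R) (haff : AffinePre R) :
    ∃ u : X → ℝ, IsLip u ∧
      ∀ p q : Measure X, MemDelta1 p → MemDelta1 q →
        (R p q ↔ ∫ x, u x ∂q ≤ ∫ x, u x ∂p) := by
  classical
  by_cases hstrict : ∃ a b : Measure X, MemDelta1 a ∧ MemDelta1 b ∧ ¬ R b a
  · obtain ⟨a, b, ha, hb, hab⟩ := hstrict
    have h : Stmt13.Nice R := ⟨hrefl, htrans, htotal, hlip, haff⟩
    obtain ⟨K, hK, hlipU⟩ := Stmt13.Uval_lip h ha hb hab
    set u : X → ℝ := fun x => Stmt13.Uval R a b (Measure.dirac x) with hu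
    have hudist : ∀ x y : X, dist (u x) (u y) ≤ (1/K) * dist x y := by
      intro x y
      have h1 := hlipU _ _ (Stmt13.dirac_memDelta1 x) (Stmt13.dirac_memDelta1 y)
      have h2 := hlipU _ _ (Stmt13.dirac_memDelta1 y) (Stmt13.dirac_memDelta1 x)
      have hWxy := Stmt13.w1_dirac_le x y
      have hWyx := Stmt13.w1_dirac_le y x
      have hWxy0 := Stmt13.w1_nonneg (Stmt13.dirac_memDelta1 x) (Stmt13.dirac_memDelta1 y)
      have hWyx0 := Stmt13.w1_nonneg (Stmt13.dirac_memDelta1 y) (Stmt13.dirac_memDelta1 x)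
      rw [Real.dist_eq, abs_sub_le_iff]
      constructor
      · calc u x - u y ≤ W1 (Measure.dirac y) (Measure.dirac x) / K := h2
          _ ≤ dist y x / K := by
              apply div_le_div_of_nonneg_right ?_ hK.le
              exact hWyx
          _ = (1/K) * dist x y := by rw [dist_comm]; ring
      · calc u y - u x ≤ W1 (Measure.dirac x) (Measure.dirac y) / K := h1
          _ ≤ dist x y / K := by
              apply div_le_div_of_nonneg_right ?_ hK.le
              exact hWxy
          _ = (1/K) * dist x y := by ring
    have hulip : LipschitzWith (Real.toNNReal (1/K)) u :=
      LipschitzWith.of_dist_le_mul fun x y => by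
        rw [Real.coe_toNNReal _ (by positivity)]
        exact hudist x y
    have hint : ∀ p : Measure X, MemDelta1 p → ∫ x, u x ∂p = Stmt13.Uval R a b p := by
      intro p hp
      have key : ∀ ε : ℝ, 0 < ε → |∫ x, u x ∂p - Stmt13.Uval R a b p| ≤ 4 * ε / K := by
        intro ε hε
        obtain ⟨n, w, c, hw1, hWν⟩ := Stmt13.approx hp hε
        set ν := ∑ k, w k • Measure.dirac (c k) with hνdef
        obtain ⟨hνmem, hνU⟩ := Stmt13.fin_rep h ha hb hab n w c hw1
        have hwk_ne_top : ∀ k, w k ≠ ⊤ := fun k =>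
          ne_top_of_le_ne_top ENNReal.one_ne_top
            (hw1 ▸ Finset.single_le_sum (fun i _ => zero_le) (Finset.mem_univ k))
        have hintν : ∫ x, u x ∂ν = ∑ k, (w k).toReal * u (c k) := by
          rw [hνdef, integral_finset_sum_measure (fun k _ =>
            ((Stmt13.dirac_memDelta1 (c k)).2 u ⟨_, hulip⟩).smul_measure (hwk_ne_top k))]
          refine Finset.sum_congr rfl fun k _ => ?_
          rw [integral_smul_measure, integral_dirac, smul_eq_mul]
        have hUν : Stmt13.Uval R a b ν = ∫ x, u x ∂ν := by
          rw [hintν, hνU]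
        have hKu : LipschitzWith 1 (fun x => K * u x) :=
          LipschitzWith.of_dist_le_mul fun x y => by
            rw [NNReal.coe_one, one_mul, Real.dist_eq, ← mul_sub, abs_mul, abs_of_pos hK]
            have h' : |u x - u y| ≤ (1/K) * dist x y := by
              rw [← Real.dist_eq]; exact hudist x y
            calc K * |u x - u y| ≤ K * ((1/K) * dist x y) := by
                  exact mul_le_mul_of_nonneg_left h' (le_of_lt hK)
              _ = dist x y := by field_simp
        have hWν0 : 0 ≤ W1 p ν := Stmt13.w1_nonneg hp hνmem
        have hb1 : |∫ x, u x ∂p - ∫ x, u x ∂ν| ≤ W1 p ν / K := by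
          have hw := Stmt13.le_w1 hp hνmem hKu
          rw [integral_const_mul ,integral_const_mul, ← mul_sub, abs_mul, abs_of_pos hK]
            at hw
          rw [le_div_iff₀ hK, mul_comm]
          exact hw
        have hb2 : |Stmt13.Uval R a b p - Stmt13.Uval R a b ν| ≤ W1 p ν / K := by
          rw [abs_sub_le_iff]
          constructor
          · have := hlipU ν p hνmem hp
            rwa [Stmt13.w1_symm ν p] at this
          · exact hlipU p ν hp hνmem
        calc |∫ x, u x ∂p - Stmt13.Uval R a b p|
            ≤ |∫ x, u x ∂p - ∫ x, u x ∂ν| + |∫ x, u x ∂ν - Stmt13.Uval R a b p| := by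
              have := abs_sub_le (∫ x, u x ∂p) (∫ x, u x ∂ν) (Stmt13.Uval R a b p)
              exact this
          _ ≤ W1 p ν / K + W1 p ν / K := by
              refine add_le_add hb1 ?_
              rw [← hUν, abs_sub_comm]
              exact hb2
          _ ≤ 2 * ε / K + 2 * ε / K := by
              have hle : W1 p ν / K ≤ 2 * ε / K := div_le_div_of_nonneg_right ?_ hK.le
              · exact add_le_add hle hle
              · exact hWν
          _ = 4 * ε / K := by ring
      by_contra hne
      have habs : 0 < |∫ x, u x ∂p - Stmt13.Uval R a b p| :=
        abs_pos.mpr (sub_ne_zero.mpr hne)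
      have hkey := key (K * |∫ x, u x ∂p - Stmt13.Uval R a b p| / 8) (by positivity)
      have heq : 4 * (K * |∫ x, u x ∂p - Stmt13.Uval R a b p| / 8) / K =
          |∫ x, u x ∂p - Stmt13.Uval R a b p| / 2 := by
        field_simp
        ring
      rw [heq] at hkey
      linarith
    refine ⟨u, ⟨_, hulip⟩, fun p q hp hq => ?_⟩
    rw [hint p hp, hint q hq]
    exact Stmt13.Uval_rep h ha hb hab hp hq
  · push_neg at hstrict
    refine ⟨fun _ => 0, ⟨1, (LipschitzWith.const 0).weaken zero_le_one⟩,
      fun p q hp hq => ?_⟩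
    simp only [integral_zero]
    exact ⟨fun _ => le_refl 0, fun _ => hstrict q p hq hp⟩

end Main
end

section
/- Let E be a topological vector space, S a nonempty convex subset of E, and ≿ a weakly affine preorder on S that is a closed subset of S × S. Then ≿ is affine: for all p, q, r ∈ S and λ ∈ [0,1), (1−λ)p + λr ≿ (1−λ)q + λr implies p ≿ q. -/
open Filter Topology

theorem stmt15 {E : Type*} [AddCommGroup E] [Module ℝ E] [TopologicalSpace E]
    [IsTopologicalAddGroup E] [ContinuousSMul ℝ E]
    (S : Set E) (hne : S.Nonempty) (hconv : Convex ℝ S)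
    (R : E → E → Prop)
    (hrefl : ∀ p ∈ S, R p p)
    (htrans : ∀ p ∈ S, ∀ q ∈ S, ∀ r ∈ S, R p q → R q r → R p r)
    -- weak affinity:
    (hwa : ∀ p ∈ S, ∀ q ∈ S, ∀ r ∈ S, ∀ lam : ℝ, 0 ≤ lam → lam < 1 →
      R p q → R ((1 - lam) • p + lam • r) ((1 - lam) • q + lam • r))
    -- continuity (sequential closedness of the graph in S × S):
    (hclosed : ∀ (u v : ℕ → E) (p q : E), p ∈ S → q ∈ S →
      (∀ n, u n ∈ S ∧ v n ∈ S ∧ R (u n) (v n)) →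
      Tendsto u atTop (𝓝 p) → Tendsto v atTop (𝓝 q) → R p q) :
    ∀ p ∈ S, ∀ q ∈ S, ∀ r ∈ S, ∀ lam : ℝ, 0 ≤ lam → lam < 1 →
      R ((1 - lam) • p + lam • r) ((1 - lam) • q + lam • r) → R p q := by
  intro p hp q hq r hr lam hlam0 hlam1 hR
  set x : ℝ → E := fun b => (1 - b) • p + b • r with hxdef
  set y : ℝ → E := fun b => (1 - b) • q + b • r with hydef
  have hxS : ∀ b : ℝ, 0 ≤ b → b ≤ 1 → x b ∈ S := fun b h0 h1 =>
    hconv hp hr (by linarith) h0 (by ring)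
  have hyS : ∀ b : ℝ, 0 ≤ b → b ≤ 1 → y b ∈ S := fun b h0 h1 =>
    hconv hq hr (by linarith) h0 (by ring)
  -- one-step reduction of the mixing coefficient
  have step : ∀ b : ℝ, 0 ≤ b → b < 1 → R (x b) (y b) →
      R (x (b / (2 - b))) (y (b / (2 - b))) := by
    intro b hb0 hb1 hRb
    have h2b : (1:ℝ) < 2 - b := by linarith
    set t : ℝ := 1 / (2 - b) with ht
    have hne2 : (2:ℝ) - b ≠ 0 := by linarith
    have hinv : (2 - b) * (2 - b)⁻¹ = 1 := mul_inv_cancel₀ hne2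
    have ht0 : 0 < t := by rw [ht]; positivity
    have ht1 : t < 1 := by rw [ht, div_lt_one (by linarith)]; linarith
    have htb : t * (2 - b) = 1 := by rw [ht]; field_simp
    have hxb : x b ∈ S := hxS b hb0 hb1.le
    have hyb : y b ∈ S := hyS b hb0 hb1.le
    have hA := hwa (x b) hxb (y b) hyb p hp (1 - t) (by linarith) (by linarith) hRb
    have hB := hwa (x b) hxb (y b) hyb q hq (1 - t) (by linarith) (by linarith) hRb
    -- identify the three points
    have e1 : (1 - (1 - t)) • (x b) + (1 - t) • p = x (b / (2 - b)) := by
      have hdiv : b / (2 - b) = t * b := by rw [ht]; ring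
      rw [hdiv, hxdef]
      match_scalars <;> first | linear_combination hinv | linear_combination -hinv | (field_simp; try ring)
    have e2 : (1 - (1 - t)) • (y b) + (1 - t) • q = y (b / (2 - b)) := by
      have hdiv : b / (2 - b) = t * b := by rw [ht]; ring
      rw [hdiv, hydef]
      match_scalars <;> first | linear_combination hinv | linear_combination -hinv | (field_simp; try ring)
    have emid : (1 - (1 - t)) • (y b) + (1 - t) • p
        = (1 - (1 - t)) • (x b) + (1 - t) • q := by
      rw [hxdef, hydef]
      match_scalars <;> first | linear_combination hinv | linear_combination -hinv | (field_simp; try ring)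
    rw [e1] at hA
    rw [e2] at hB
    rw [emid] at hA
    have hco0 : 0 ≤ b / (2 - b) := div_nonneg hb0 (by linarith)
    have hco1 : b / (2 - b) < 1 := by rw [div_lt_one (by linarith)]; linarith
    have hmidS : (1 - (1 - t)) • (x b) + (1 - t) • q ∈ S := by
      have : (1 - (1 - t)) = t := by ring
      rw [this]
      exact hconv hxb hq ht0.le (by linarith) (by ring)
    exact htrans _ (hxS _ hco0 hco1.le) _ hmidS _ (hyS _ hco0 hco1.le) hA hB
  -- iterate
  set β : ℕ → ℝ := fun n => Nat.rec lam (fun _ c => c / (2 - c)) n with hβdef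
  have hβsucc : ∀ n, β (n + 1) = β n / (2 - β n) := fun n => rfl
  set c : ℝ := 1 / (2 - lam) with hc
  have hc0 : 0 ≤ c := div_nonneg zero_le_one (by linarith)
  have hc1 : c < 1 := by rw [hc, div_lt_one (by linarith)]; linarith
  have key : ∀ n, (0 ≤ β n ∧ β n ≤ lam * c ^ n) ∧ R (x (β n)) (y (β n)) := by
    intro n
    induction n with
    | zero =>
      have hz : β 0 = lam := rfl
      exact ⟨⟨by rw [hz]; exact hlam0, by rw [hz]; simp⟩, by rw [hz]; exact hR⟩
    | succ n ih =>
      obtain ⟨⟨h0, hub⟩, hRn⟩ := ih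
      have hcn : c ^ n ≤ 1 := pow_le_one₀ hc0 hc1.le
      have hlam : β n ≤ lam := by
        calc β n ≤ lam * c ^ n := hub
        _ ≤ lam * 1 := by gcongr
        _ = lam := by ring
      have h1 : β n < 1 := lt_of_le_of_lt hlam hlam1
      refine ⟨⟨by rw [hβsucc]; exact div_nonneg h0 (by linarith), ?_⟩, by rw [hβsucc]; exact step _ h0 h1 hRn⟩
      rw [hβsucc]
      calc β n / (2 - β n) ≤ β n / (2 - lam) := by
            apply div_le_div_of_nonneg_left h0 (by linarith) (by linarith)
        _ = β n * c := by rw [hc]; ring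
        _ ≤ (lam * c ^ n) * c := by gcongr
        _ = lam * c ^ (n + 1) := by ring
  have hβ0 : Tendsto β atTop (𝓝 0) := by
    apply squeeze_zero (fun n => (key n).1.1) (fun n => (key n).1.2)
    have := (tendsto_pow_atTop_nhds_zero_of_lt_one hc0 hc1).const_mul lam
    simpa using this
  have hcontx : Continuous x := by
    rw [hxdef]
    exact ((continuous_const.sub continuous_id).smul continuous_const).add
      (continuous_id.smul continuous_const)
  have hconty : Continuous y := by
    rw [hydef]
    exact ((continuous_const.sub continuous_id).smul continuous_const).add
      (continuous_id.smul continuous_const)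
  have hux : Tendsto (fun n => x (β n)) atTop (𝓝 p) := by
    have := (hcontx.tendsto 0).comp hβ0
    simpa [hxdef, Function.comp_def] using this
  have huy : Tendsto (fun n => y (β n)) atTop (𝓝 q) := by
    have := (hconty.tendsto 0).comp hβ0
    simpa [hydef, Function.comp_def] using this
  refine hclosed (fun n => x (β n)) (fun n => y (β n)) p q hp hq (fun n => ?_) hux huy
  have h0 := (key n).1.1
  have h1 : β n ≤ 1 := by
    have hcn : c ^ n ≤ 1 := pow_le_one₀ hc0 hc1.le
    have := (key n).1.2
    nlinarith
  exact ⟨hxS _ h0 h1, hyS _ h0 h1, (key n).2⟩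
end
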